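/- arXiv:math/0412548 — 4 statements merged into one kernel-verified Lean document; each statement's English description precedes it below -/
import Mathlib

section
/- Let n ≥ 1 and let λ, μ be partitions of length n (weakly decreasing n-tuples of nonnegative integers) with |λ| ≥ |μ|, and let k be a nonnegative integer with 2k ≥ |λ| − |μ|. Then K̃^{D_n}_{λ,μ}(q) = K^{D_n}_{λ+kκ_n, μ+kκ_n}(q), where κ_n = (1,…,1) ∈ ℤ^n. -/
open Finset Polynomial

noncomputable section

/-- The standard basis vector `ε_i` of `ℤ^n`. -/
def eps (n : ℕ) (i : Fin n) : Fin n → ℤ := Pi.single i 1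

/-- Pairs `(i,j)` with `i < j`. -/
def pairsLt (n : ℕ) : Finset (Fin n × Fin n) :=
  Finset.univ.filter fun p => p.1 < p.2

/-- Pairs `(i,j)` with `i ≤ j`. -/
def pairsLe (n : ℕ) : Finset (Fin n × Fin n) :=
  Finset.univ.filter fun p => p.1 ≤ p.2

/-- Positive roots of type `A_{n-1}`: the `ε_i - ε_j`, `i < j`. -/
def RA (n : ℕ) : Finset (Fin n → ℤ) :=
  (pairsLt n).image fun p => eps n p.1 - eps n p.2

/-- Positive roots of type `D_n`: the `ε_i - ε_j` and `ε_i + ε_j`, `i < j`. -/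
def RD (n : ℕ) : Finset (Fin n → ℤ) :=
  RA n ∪ ((pairsLt n).image fun p => eps n p.1 + eps n p.2)

/-- Positive roots of type `C_n`: those of `D_n` together with the `2ε_i`. -/
def RC (n : ℕ) : Finset (Fin n → ℤ) :=
  RD n ∪ (Finset.univ.image fun i : Fin n => (2 : ℤ) • eps n i)

/-- Positive roots of type `B_n`: those of `D_n` together with the `ε_i`. -/
def RB (n : ℕ) : Finset (Fin n → ℤ) :=
  RD n ∪ (Finset.univ.image fun i : Fin n => eps n i)

/-- The `q`-partition function attached to a finite set `R` of positive roots: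
`P_q(β) = Σ_m q^{Σ_α m(α)}`, the sum over the (finitely many) functions
`m : R → ℕ` with `Σ_α m(α)·α = β`. -/
def Pq (n : ℕ) (R : Finset (Fin n → ℤ)) (β : Fin n → ℤ) : Polynomial ℤ :=
  ∑ᶠ m ∈ {m : (Fin n → ℤ) → ℕ |
      (∀ α, α ∉ R → m α = 0) ∧ ∑ α ∈ R, m α • α = β},
    (X : Polynomial ℤ) ^ ∑ α ∈ R, m α

/-- `ρ_n = (n, n-1, ..., 1)`. -/
def rho (n : ℕ) : Fin n → ℤ := fun i => (n : ℤ) - ((i : ℕ) : ℤ)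

/-- `ρ_{D_n} = (n-1, n-2, ..., 0)`. -/
def rhoD (n : ℕ) : Fin n → ℤ := fun i => (n : ℤ) - ((i : ℕ) : ℤ) - 1

/-- The restricted alternating sum `K̃_{λ,μ}(q) = Σ_{σ ∈ S_n} sgn(σ) P_q(σ(λ+ρ_n) - (μ+ρ_n))`
attached to a set `R` of positive roots.  For `R = RA n` this is the type `A_{n-1}`
Kostka-Foulkes polynomial `K^{A_{n-1}}_{λ,μ}(q)`. -/
def KT (n : ℕ) (R : Finset (Fin n → ℤ)) (lam mu : Fin n → ℤ) : Polynomial ℤ :=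
  ∑ σ : Equiv.Perm (Fin n),
    (Equiv.Perm.sign σ : ℤ) •
      Pq n R (fun i => (lam + rho n) (σ i) - (mu + rho n) i)

/-- The type `C_n` Kostka-Foulkes polynomial: the alternating sum over the
hyperoctahedral group `W_{C_n}` (signed permutations, a signed permutation being
encoded as a pair `(σ, e)` acting by `v ↦ (i ↦ e i * v (σ i))`, whose determinant
is `sgn(σ) * ∏ i, e i`), with `ρ_{C_n} = ρ_n`. -/
def KC (n : ℕ) (lam mu : Fin n → ℤ) : Polynomial ℤ :=
  ∑ σ : Equiv.Perm (Fin n), ∑ e : Fin n → ℤˣ,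
    ((Equiv.Perm.sign σ : ℤ) * ∏ i, (e i : ℤ)) •
      Pq n (RC n) (fun i => (e i : ℤ) * (lam + rho n) (σ i) - (mu + rho n) i)

/-- The type `D_n` Kostka-Foulkes polynomial: the alternating sum over `W_{D_n}`
(signed permutations with an even number of sign changes), with `ρ_{D_n} = (n-1, ..., 0)`. -/
def KD (n : ℕ) (lam mu : Fin n → ℤ) : Polynomial ℤ :=
  ∑ σ : Equiv.Perm (Fin n),
    ∑ e ∈ Finset.univ.filter (fun e : Fin n → ℤˣ => ∏ i, e i = 1),
      ((Equiv.Perm.sign σ : ℤ) * ∏ i, (e i : ℤ)) •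
        Pq n (RD n) (fun i => (e i : ℤ) * (lam + rhoD n) (σ i) - (mu + rhoD n) i)

/-- `c(δ)`: the number of families `(e_{rs})_{1 ≤ r ≤ s ≤ n}` of nonnegative integers
with `Σ_{r ≤ s} e_{rs} (ε_r + ε_s) = δ`. -/
def cC (n : ℕ) (δ : Fin n → ℤ) : ℕ :=
  Set.ncard {e : Fin n × Fin n → ℕ |
    (∀ p, p ∉ pairsLe n → e p = 0) ∧
    ∑ p ∈ pairsLe n, e p • (eps n p.1 + eps n p.2) = δ}

/-- `d(δ)`: the number of families `(e_{rs})_{1 ≤ r < s ≤ n}` of nonnegative integers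
with `Σ_{r < s} e_{rs} (ε_r + ε_s) = δ`. -/
def dD (n : ℕ) (δ : Fin n → ℤ) : ℕ :=
  Set.ncard {e : Fin n × Fin n → ℕ |
    (∀ p, p ∉ pairsLt n → e p = 0) ∧
    ∑ p ∈ pairsLt n, e p • (eps n p.1 + eps n p.2) = δ}

/-- `f_q(β)`: the coefficient of `x^β` in
`∏_{i<j} (1 - q x_i/x_j)⁻¹ ∏_{r<s} (1 - q/(x_r x_s))⁻¹`, i.e. the sum of
`q^{Σ a + Σ b}` over families `a = (a_{ij})_{i<j}`, `b = (b_{rs})_{r<s}` of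
nonnegative integers with `Σ a_{ij}(ε_i - ε_j) - Σ b_{rs}(ε_r + ε_s) = β`. -/
def fq (n : ℕ) (β : Fin n → ℤ) : Polynomial ℤ :=
  ∑ᶠ ab ∈ {ab : ((Fin n × Fin n) → ℕ) × ((Fin n × Fin n) → ℕ) |
      (∀ p, p ∉ pairsLt n → ab.1 p = 0) ∧ (∀ p, p ∉ pairsLt n → ab.2 p = 0) ∧
      ((∑ p ∈ pairsLt n, ab.1 p • (eps n p.1 - eps n p.2)) -
        ∑ p ∈ pairsLt n, ab.2 p • (eps n p.1 + eps n p.2)) = β},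
    (X : Polynomial ℤ) ^ ((∑ p ∈ pairsLt n, ab.1 p) + ∑ p ∈ pairsLt n, ab.2 p)

/-- `F_q(β)`: the coefficient of `x^β` in
`∏_{i<j} (1 - q x_i/x_j)⁻¹ ∏_{r≤s} (1 - q/(x_r x_s))⁻¹`, i.e. the sum of
`q^{Σ a + Σ b}` over families `a = (a_{ij})_{i<j}`, `b = (b_{rs})_{r≤s}` of
nonnegative integers with `Σ a_{ij}(ε_i - ε_j) - Σ b_{rs}(ε_r + ε_s) = β`. -/
def Fq (n : ℕ) (β : Fin n → ℤ) : Polynomial ℤ :=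
  ∑ᶠ ab ∈ {ab : ((Fin n × Fin n) → ℕ) × ((Fin n × Fin n) → ℕ) |
      (∀ p, p ∉ pairsLt n → ab.1 p = 0) ∧ (∀ p, p ∉ pairsLe n → ab.2 p = 0) ∧
      ((∑ p ∈ pairsLt n, ab.1 p • (eps n p.1 - eps n p.2)) -
        ∑ p ∈ pairsLe n, ab.2 p • (eps n p.1 + eps n p.2)) = β},
    (X : Polynomial ℤ) ^ ((∑ p ∈ pairsLt n, ab.1 p) + ∑ p ∈ pairsLe n, ab.2 p)

/-- The `q`-multiplicity `u_{λ,μ}(q) = Σ_{σ ∈ S_n} sgn(σ) f_q(σ(λ+ρ_n) - (μ+ρ_n))`. -/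
def uP (n : ℕ) (lam mu : Fin n → ℤ) : Polynomial ℤ :=
  ∑ σ : Equiv.Perm (Fin n),
    (Equiv.Perm.sign σ : ℤ) •
      fq n (fun i => (lam + rho n) (σ i) - (mu + rho n) i)

/-- The `q`-multiplicity `U_{λ,μ}(q) = Σ_{σ ∈ S_n} sgn(σ) F_q(σ(λ+ρ_n) - (μ+ρ_n))`. -/
def UP (n : ℕ) (lam mu : Fin n → ℤ) : Polynomial ℤ :=
  ∑ σ : Equiv.Perm (Fin n),
    (Equiv.Perm.sign σ : ℤ) •
      Fq n (fun i => (lam + rho n) (σ i) - (mu + rho n) i)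

/-- `1_ℕ(β) = 1` if all coordinates of `β` are nonnegative, and `0` otherwise. -/
def indNat (n : ℕ) (v : Fin n → ℤ) : ℤ := if ∀ i, 0 ≤ v i then 1 else 0

/-- The branching coefficient `b_{λ,ν} = Σ_{σ ∈ S_n} sgn(σ) 1_ℕ(σ(λ+ρ_n) - (ν+ρ_n))`. -/
def bcoef (n : ℕ) (lam nu : Fin n → ℤ) : ℤ :=
  ∑ σ : Equiv.Perm (Fin n),
    (Equiv.Perm.sign σ : ℤ) *
      indNat n (fun i => (lam + rho n) (σ i) - (nu + rho n) i)

/-- The coefficient of `q^j` (for `j : ℤ`) in a polynomial: `0` for negative `j`. -/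
def zcoeff (p : Polynomial ℤ) (j : ℤ) : ℤ := if 0 ≤ j then p.coeff j.toNat else 0

/-- The conjugate partition, padded with zeros to length `n`:
`λ'_i = #{j : λ_j ≥ i}` (for the `i`-th coordinate, `i = 1, ..., n`). -/
def conj (n : ℕ) (lam : Fin n → ℤ) : Fin n → ℤ :=
  fun i => ((Finset.univ.filter fun j : Fin n => ((i : ℕ) : ℤ) + 1 ≤ lam j).card : ℤ)

end

/-! A nontrivial even sign change `e` negates at least two coordinates of
`λ + kκ_n + ρ_{D_n}`; these are `≥ k` and, sitting at distinct positions of `ρ_{D_n}`, sum to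
at least `2k + 1`. Together with `2k ≥ |λ| - |μ|` this makes the coordinate sum of
`e·σ(λ + kκ_n + ρ_{D_n}) - (μ + kκ_n + ρ_{D_n})` negative, and `P_q^D` vanishes there since every
positive root of `D_n` has nonnegative coordinate sum. Only the terms with `e = 1` survive in
`K^{D_n}`, and they are those of `K̃^{D_n}` because `ρ_n = ρ_{D_n} + κ_n`. -/

lemma sum_eps (n : ℕ) (i : Fin n) : ∑ j, eps n i j = 1 := by
  simp [eps, Pi.single_apply]

lemma sum_nonneg_of_mem_RD {n : ℕ} {α : Fin n → ℤ} (hα : α ∈ RD n) : 0 ≤ ∑ i, α i := by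
  simp only [RD, RA, mem_union, mem_image] at hα
  rcases hα with ⟨p, -, rfl⟩ | ⟨p, -, rfl⟩
  · simp [sum_sub_distrib, sum_eps]
  · simp [sum_add_distrib, sum_eps]

lemma Pq_eq_zero_of_sum_neg {n : ℕ} {R : Finset (Fin n → ℤ)} (hR : ∀ α ∈ R, 0 ≤ ∑ i, α i)
    {β : Fin n → ℤ} (hβ : ∑ i, β i < 0) : Pq n R β = 0 := by
  have hempty : {m : (Fin n → ℤ) → ℕ |
      (∀ α, α ∉ R → m α = 0) ∧ ∑ α ∈ R, m α • α = β} = ∅ := by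
    refine Set.eq_empty_of_forall_notMem fun m ⟨_, hm⟩ => hβ.not_ge ?_
    have hsum : ∑ i, β i = ∑ α ∈ R, (m α : ℤ) * ∑ i, α i := by
      simp only [← hm, Finset.sum_apply, nsmul_eq_mul, Pi.mul_apply,
        Pi.natCast_apply, mul_sum]
      exact sum_comm
    rw [hsum]
    exact sum_nonneg fun α hα => mul_nonneg (Int.natCast_nonneg _) (hR α hα)
  rw [Pq, hempty, finsum_mem_empty]

lemma exists_pair_eq_neg_one_of_prod_eq_one {ι : Type*} [Fintype ι] {e : ι → ℤˣ} (hprod : ∏ i, e i = 1)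
    (hne : e ≠ 1) : ∃ i j, i ≠ j ∧ e i = -1 ∧ e j = -1 := by
  obtain ⟨i, hi⟩ : ∃ i, e i = -1 := by
    by_contra! h
    exact hne (funext fun i => (Int.units_eq_one_or (e i)).resolve_right (h i))
  by_contra! h
  have hprod_neg : ∏ j, e j = -1 := by
    rw [prod_eq_single i (fun j _ hji => (Int.units_eq_one_or (e j)).resolve_right
      (h i j (Ne.symm hji) hi)) (by simp)]
    exact hi
  exact absurd (hprod_neg.symm.trans hprod) (by decide)

lemma sum_units_mul_sub {ι : Type*} [Fintype ι] (e : ι → ℤˣ) (σ : Equiv.Perm ι) (L M : ι → ℤ) :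
    ∑ i, ((e i : ℤ) * L (σ i) - M i) =
      ∑ i, L i - ∑ i, M i - 2 * ∑ i with e i = -1, L (σ i) := by
  have hterm : ∀ i, (e i : ℤ) * L (σ i) - M i =
      (L (σ i) - M i) - if e i = -1 then 2 * L (σ i) else 0 := by
    intro i
    rcases Int.units_eq_one_or (e i) with h | h <;> simp [h]; ring
  rw [sum_congr rfl fun i _ => hterm i, sum_sub_distrib, sum_sub_distrib, ← sum_filter,
    Equiv.sum_comp σ L, mul_sum]

lemma rho_eq_rhoD_add_one (n : ℕ) (i : Fin n) : rho n i = rhoD n i + 1 := by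
  simp only [rho, rhoD]
  ring

lemma rhoD_nonneg (n : ℕ) (i : Fin n) : 0 ≤ rhoD n i := by
  have := i.isLt
  simp only [rhoD]
  omega

lemma one_le_rhoD_add_rhoD {n : ℕ} {i j : Fin n} (hij : i ≠ j) : 1 ≤ rhoD n i + rhoD n j := by
  have hval : (i : ℕ) ≠ j := Fin.val_ne_of_ne hij
  have := i.isLt
  have := j.isLt
  simp only [rhoD]
  omega

lemma Pq_RD_sign_change_eq_zero {n : ℕ} {lam mu : Fin n → ℤ} (hlam0 : ∀ i, 0 ≤ lam i) {k : ℕ}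
    (hk : ∑ i, lam i - ∑ i, mu i ≤ 2 * (k : ℤ)) (σ : Equiv.Perm (Fin n)) {e : Fin n → ℤˣ}
    (hprod : ∏ i, e i = 1) (hne : e ≠ 1) :
    Pq n (RD n) (fun i => (e i : ℤ) * ((fun i => lam i + (k : ℤ)) + rhoD n) (σ i) -
      ((fun i => mu i + (k : ℤ)) + rhoD n) i) = 0 := by
  set L : Fin n → ℤ := (fun i => lam i + (k : ℤ)) + rhoD n
  set M : Fin n → ℤ := (fun i => mu i + (k : ℤ)) + rhoD n
  have hL : ∀ j, (k : ℤ) + rhoD n j ≤ L j := fun j => by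
    simp only [L, Pi.add_apply]
    linarith [hlam0 j]
  obtain ⟨i, j, hij, hi, hj⟩ := exists_pair_eq_neg_one_of_prod_eq_one hprod hne
  have hflipped : 2 * (k : ℤ) + 1 ≤ ∑ i with e i = -1, L (σ i) := by
    have hpair : ({i, j} : Finset (Fin n)) ⊆ univ.filter fun i => e i = -1 := by
      simp [insert_subset_iff, hi, hj]
    calc 2 * (k : ℤ) + 1 ≤ L (σ i) + L (σ j) := by
          linarith [hL (σ i), hL (σ j), one_le_rhoD_add_rhoD (σ.injective.ne hij)]
      _ = ∑ l ∈ {i, j}, L (σ l) := (sum_pair (f := fun l => L (σ l)) hij).symm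
      _ ≤ _ := sum_le_sum_of_subset_of_nonneg hpair fun l _ _ =>
          (add_nonneg (Int.natCast_nonneg k) (rhoD_nonneg n _)).trans (hL _)
  have hLM : ∑ i, L i - ∑ i, M i = ∑ i, lam i - ∑ i, mu i := by
    simp only [L, M, Pi.add_apply, sum_add_distrib]
    ring
  refine Pq_eq_zero_of_sum_neg (fun α => sum_nonneg_of_mem_RD) ?_
  rw [sum_units_mul_sub, hLM]
  linarith

theorem Ktilde_eq_KostkaFoulkes_D_general (n : ℕ) (lam mu : Fin n → ℤ)
    (hlam0 : ∀ i, 0 ≤ lam i)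
    (k : ℕ) (hk : (∑ i, lam i) - ∑ i, mu i ≤ 2 * (k : ℤ)) :
    KT n (RD n) lam mu =
      KD n (fun i => lam i + (k : ℤ)) (fun i => mu i + (k : ℤ)) := by
  unfold KT KD
  refine sum_congr rfl fun σ _ => ?_
  rw [sum_eq_single_of_mem 1 (by simp) fun e he hne => by
    rw [Pq_RD_sign_change_eq_zero hlam0 hk σ (mem_filter.1 he).2 hne, smul_zero]]
  simp only [Pi.one_apply, Units.val_one, one_mul, prod_const_one, mul_one]
  congr 2
  funext i
  simp only [Pi.add_apply, rho_eq_rhoD_add_one]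
  ring

/-- for partitions `λ, μ` of length `n` with `|λ| ≥ |μ|` and `2k ≥ |λ| - |μ|`,
`K̃^{D_n}_{λ,μ}(q) = K^{D_n}_{λ+kκ_n, μ+kκ_n}(q)` where `κ_n = (1,…,1)`. -/
theorem Ktilde_eq_KostkaFoulkes_D (n : ℕ) (hn : 1 ≤ n) (lam mu : Fin n → ℤ)
    (hlam : Antitone lam) (hlam0 : ∀ i, 0 ≤ lam i)
    (hmu : Antitone mu) (hmu0 : ∀ i, 0 ≤ mu i)
    (hsum : ∑ i, mu i ≤ ∑ i, lam i)
    (k : ℕ) (hk : (∑ i, lam i) - ∑ i, mu i ≤ 2 * (k : ℤ)) :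
    KT n (RD n) lam mu =
      KD n (fun i => lam i + (k : ℤ)) (fun i => mu i + (k : ℤ)) :=
  Ktilde_eq_KostkaFoulkes_D_general n lam mu hlam0 k hk
end

section
/- Let λ, μ be partitions of length n with |λ| ≥ |μ|. Then K̃^{B_n}_{λ,μ}(q) = Σ_{ν} q^{|λ|−|ν|} b_{λ,ν} K̃^{D_n}_{ν,μ}(q), where ν runs over the weakly decreasing sequences in ℤ^n, b_{λ,ν} = Σ_{σ∈S_n} sgn(σ) 1_ℕ(σ(λ+ρ_n) − (ν+ρ_n)) with 1_ℕ(β) = 1 if all coordinates of β are nonnegative and 0 otherwise, only finitely many summands are nonzero, and every nonzero summand has |ν| ≤ |λ|. (The coefficient b_{λ,ν} is the paper's alternating-sum expression for the branching multiplicity of the so_{2n}-module of highest weight ν+kκ_n in the so_{2n+1}-module of highest weight λ+kκ_n for k large.) -/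
open Finset Polynomial

namespace Kaux

variable {n : ℕ}

lemma eps_apply (i j : Fin n) : eps n i j = if j = i then 1 else 0 := Pi.single_apply i 1 j

lemma eps_inj : Function.Injective (eps n) := by
  intro i j h
  have := congrFun h i
  simp only [eps_apply, if_pos rfl] at this
  by_contra hne
  rw [if_neg hne] at this
  exact one_ne_zero this

/-- linear functional with coefficient vector `c` -/
def lf (c : Fin n → ℤ) (v : Fin n → ℤ) : ℤ := ∑ i, c i * v i

lemma lf_sum_smul (c : Fin n → ℤ) (R : Finset (Fin n → ℤ)) (m : (Fin n → ℤ) → ℕ) :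
    lf c (∑ α ∈ R, m α • α) = ∑ α ∈ R, (m α : ℤ) * lf c α := by
  unfold lf
  simp only [Finset.sum_apply, Pi.smul_apply, Finset.mul_sum]
  rw [Finset.sum_comm]
  refine Finset.sum_congr rfl fun α _ => ?_
  refine Finset.sum_congr rfl fun i _ => ?_
  rw [nsmul_eq_mul]
  ring

lemma lf_eps (c : Fin n → ℤ) (i : Fin n) : lf c (eps n i) = c i := by
  unfold lf
  simp [eps_apply, mul_ite]

lemma lf_sub (c u v : Fin n → ℤ) : lf c (u - v) = lf c u - lf c v := by
  unfold lf
  simp [Pi.sub_apply, mul_sub, Finset.sum_sub_distrib]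

lemma lf_add (c u v : Fin n → ℤ) : lf c (u + v) = lf c u + lf c v := by
  unfold lf
  simp [Pi.add_apply, mul_add, Finset.sum_add_distrib]

lemma mem_RD_iff {α : Fin n → ℤ} :
    α ∈ RD n ↔ ∃ i j : Fin n, i < j ∧ (α = eps n i - eps n j ∨ α = eps n i + eps n j) := by
  simp only [RD, RA, pairsLt, Finset.mem_union, Finset.mem_image, Finset.mem_filter,
    Finset.mem_univ, true_and]
  constructor
  · rintro (⟨p, hp, rfl⟩ | ⟨p, hp, rfl⟩)
    · exact ⟨p.1, p.2, hp, Or.inl rfl⟩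
    · exact ⟨p.1, p.2, hp, Or.inr rfl⟩
  · rintro ⟨i, j, hij, (rfl | rfl)⟩
    · exact Or.inl ⟨(i, j), hij, rfl⟩
    · exact Or.inr ⟨(i, j), hij, rfl⟩

lemma mem_RB_iff {α : Fin n → ℤ} :
    α ∈ RB n ↔ α ∈ RD n ∨ ∃ i, α = eps n i := by
  simp only [RB, Finset.mem_union, Finset.mem_image, Finset.mem_univ, true_and]
  constructor
  · rintro (h | ⟨i, rfl⟩)
    · exact Or.inl h
    · exact Or.inr ⟨i, rfl⟩
  · rintro (h | ⟨i, rfl⟩)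
    · exact Or.inl h
    · exact Or.inr ⟨i, rfl⟩

lemma rho_ge_one (i : Fin n) : 1 ≤ rho n i := by
  have := i.isLt
  simp only [rho]
  omega

lemma rho_le (i : Fin n) : rho n i ≤ n := by
  simp only [rho]; omega

lemma rho_strictAnti : StrictAnti (rho n) := by
  intro i j hij
  have : (i : ℕ) < (j : ℕ) := hij
  simp only [rho]
  omega

/-- `csum` of an `RD` root is `0` or `2`; in particular nonnegative. -/
lemma csum_RD_nonneg {α : Fin n → ℤ} (h : α ∈ RD n) : 0 ≤ lf (fun _ => 1) α := by
  rcases mem_RD_iff.mp h with ⟨i, j, hij, (rfl | rfl)⟩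
  · rw [lf_sub, lf_eps, lf_eps]; omega
  · rw [lf_add, lf_eps, lf_eps]; omega

lemma eps_not_mem_RD (k : Fin n) : eps n k ∉ RD n := by
  intro h
  rcases mem_RD_iff.mp h with ⟨i, j, hij, (he | he)⟩
  · have := congrArg (lf fun _ => 1) he
    rw [lf_eps, lf_sub, lf_eps, lf_eps] at this
    omega
  · have := congrArg (lf fun _ => 1) he
    rw [lf_eps, lf_add, lf_eps, lf_eps] at this
    omega

lemma wt_RB_ge_one {α : Fin n → ℤ} (h : α ∈ RB n) : 1 ≤ lf (rho n) α := by
  rcases mem_RB_iff.mp h with hD | ⟨k, rfl⟩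
  · rcases mem_RD_iff.mp hD with ⟨i, j, hij, (rfl | rfl)⟩
    · rw [lf_sub, lf_eps, lf_eps]
      have : (i : ℕ) < (j : ℕ) := hij
      simp only [rho]; omega
    · rw [lf_add, lf_eps, lf_eps]
      have := rho_ge_one i; have := rho_ge_one j; omega
  · rw [lf_eps]; exact rho_ge_one k

lemma wt_RD_ge_one {α : Fin n → ℤ} (h : α ∈ RD n) : 1 ≤ lf (rho n) α :=
  wt_RB_ge_one (by rw [mem_RB_iff]; exact Or.inl h)

lemma coord_RD_ge {α : Fin n → ℤ} (h : α ∈ RD n) (i : Fin n) : -1 ≤ α i := by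
  rcases mem_RD_iff.mp h with ⟨a, b, hab, (rfl | rfl)⟩ <;>
    · simp only [Pi.sub_apply, Pi.add_apply, eps_apply]
      split_ifs <;> omega

end Kaux

namespace Kaux

variable {n : ℕ}

/-- the index set of the sum defining `Pq` -/
def SSet (n : ℕ) (R : Finset (Fin n → ℤ)) (β : Fin n → ℤ) : Set ((Fin n → ℤ) → ℕ) :=
  {m | (∀ α, α ∉ R → m α = 0) ∧ ∑ α ∈ R, m α • α = β}

lemma Pq_def (R : Finset (Fin n → ℤ)) (β : Fin n → ℤ) :
    Pq n R β = ∑ᶠ m ∈ SSet n R β, (X : Polynomial ℤ) ^ ∑ α ∈ R, m α := rfl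

lemma SSet_bound {R : Finset (Fin n → ℤ)} (hR : ∀ α ∈ R, 1 ≤ lf (rho n) α)
    {β : Fin n → ℤ} {m : (Fin n → ℤ) → ℕ} (hm : m ∈ SSet n R β) :
    (∑ α ∈ R, (m α : ℤ)) ≤ lf (rho n) β := by
  have h1 : lf (rho n) β = ∑ α ∈ R, (m α : ℤ) * lf (rho n) α := by
    rw [← hm.2, lf_sum_smul]
  rw [h1]
  refine Finset.sum_le_sum fun α hα => ?_
  have := hR α hα
  nlinarith [Int.ofNat_nonneg (m α)]

lemma SSet_finite {R : Finset (Fin n → ℤ)} (hR : ∀ α ∈ R, 1 ≤ lf (rho n) α)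
    (β : Fin n → ℤ) : (SSet n R β).Finite := by
  classical
  set B : ℕ := (lf (rho n) β).toNat with hB
  have hsub : SSet n R β ⊆
      (fun g : {x // x ∈ R} → ℕ => fun α => if h : α ∈ R then g ⟨α, h⟩ else 0) ''
        (Set.univ.pi fun _ => Set.Iic B) := by
    intro m hm
    refine ⟨fun a => m a.1, fun a _ => ?_, ?_⟩
    · -- m a ≤ B
      have hle : (m a.1 : ℤ) ≤ lf (rho n) β := by
        calc (m a.1 : ℤ) ≤ ∑ α ∈ R, (m α : ℤ) := by
              refine Finset.single_le_sum (fun α _ => Int.ofNat_nonneg (m α)) a.2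
        _ ≤ _ := SSet_bound hR hm
      simp only [Set.mem_Iic, hB]
      omega
    · funext α
      by_cases h : α ∈ R
      · simp [h]
      · simp [h, hm.1 α h]
  exact Set.Finite.subset (Set.Finite.image _ (Set.Finite.pi fun _ => Set.finite_Iic B)) hsub

lemma Pq_eq_sum {R : Finset (Fin n → ℤ)} (hR : ∀ α ∈ R, 1 ≤ lf (rho n) α)
    (β : Fin n → ℤ) :
    Pq n R β = ∑ m ∈ (SSet_finite hR β).toFinset, (X : Polynomial ℤ) ^ ∑ α ∈ R, m α :=
  finsum_mem_eq_finite_toFinset_sum _ (SSet_finite hR β)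

lemma Pq_eq_zero {R : Finset (Fin n → ℤ)} (hR : ∀ α ∈ R, 1 ≤ lf (rho n) α)
    {β : Fin n → ℤ} (h : ¬ (SSet n R β).Nonempty) : Pq n R β = 0 := by
  rw [Pq_eq_sum hR β]
  rw [Set.not_nonempty_iff_eq_empty] at h
  rw [Finset.sum_eq_zero]
  intro m hm
  rw [Set.Finite.mem_toFinset, h] at hm
  exact absurd hm (Set.notMem_empty m)

lemma exists_of_Pq_ne_zero {R : Finset (Fin n → ℤ)} (hR : ∀ α ∈ R, 1 ≤ lf (rho n) α)
    {β : Fin n → ℤ} (h : Pq n R β ≠ 0) : (SSet n R β).Nonempty := by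
  by_contra hc
  exact h (Pq_eq_zero hR hc)

lemma hRD_wt : ∀ α ∈ RD n, 1 ≤ lf (rho n) α := fun _ h => wt_RD_ge_one h
lemma hRB_wt : ∀ α ∈ RB n, 1 ≤ lf (rho n) α := fun _ h => wt_RB_ge_one h

/-- If `SSet n (RD n) β` is nonempty then the coordinate sum of `β` is nonnegative. -/
lemma csum_nonneg_of_SD {β : Fin n → ℤ} (h : (SSet n (RD n) β).Nonempty) :
    0 ≤ ∑ i, β i := by
  obtain ⟨m, hm⟩ := h
  have h1 : lf (fun _ => 1) β = ∑ α ∈ RD n, (m α : ℤ) * lf (fun _ => 1) α := by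
    rw [← hm.2, lf_sum_smul]
  have h2 : (∑ i, β i) = lf (fun _ => 1) β := by
    unfold lf; simp
  rw [h2, h1]
  refine Finset.sum_nonneg fun α hα => ?_
  exact mul_nonneg (Int.ofNat_nonneg _) (csum_RD_nonneg hα)

end Kaux

namespace Kaux

variable {n : ℕ}

lemma eps_combo (c : Fin n → ℕ) :
    (∑ k, c k • eps n k) = fun i => (c i : ℤ) := by
  funext i
  simp only [Finset.sum_apply, Pi.smul_apply, eps_apply, smul_eq_mul]
  rw [Finset.sum_eq_single i]
  · simp
  · intro k _ hk
    simp [Ne.symm hk]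
  · simp

lemma RD_disj_eps : Disjoint (RD n) (Finset.univ.image fun i : Fin n => eps n i) := by
  rw [Finset.disjoint_right]
  intro α hα
  simp only [Finset.mem_image, Finset.mem_univ, true_and] at hα
  obtain ⟨k, rfl⟩ := hα
  exact eps_not_mem_RD k

lemma ne_eps_of_mem_RD {α : Fin n → ℤ} (h : α ∈ RD n) (k : Fin n) : α ≠ eps n k := by
  intro he; subst he; exact eps_not_mem_RD k h

lemma eps_eq_iff {i j : Fin n} : eps n i = eps n j ↔ i = j :=
  ⟨fun h => eps_inj h, fun h => h ▸ rfl⟩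

lemma sum_if_eps (c : Fin n → ℕ) (j : Fin n) :
    (∑ k, if eps n j = eps n k then c k else 0) = c j := by
  simp only [eps_eq_iff]
  simp [Finset.sum_ite_eq]

lemma sum_if_eps_zero {α : Fin n → ℤ} (c : Fin n → ℕ) (h : ∀ k, α ≠ eps n k) :
    (∑ k, if α = eps n k then c k else 0) = 0 :=
  Finset.sum_eq_zero fun k _ => if_neg (h k)

/-- the reconstruction map -/
def jfun (γ : Fin n → ℕ) (m' : (Fin n → ℤ) → ℕ) : (Fin n → ℤ) → ℕ :=
  fun α => m' α + ∑ k, if α = eps n k then γ k else 0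

def gfun (m : (Fin n → ℤ) → ℕ) : Fin n → ℕ := fun k => m (eps n k)

def resfun (m : (Fin n → ℤ) → ℕ) : (Fin n → ℤ) → ℕ :=
  fun α => if α ∈ RD n then m α else 0

lemma sum_RB_eq (m : (Fin n → ℤ) → ℕ) :
    ∑ α ∈ RB n, m α • α = (∑ α ∈ RD n, m α • α) + fun i => ((gfun m i : ℤ)) := by
  have hsplit : ∑ α ∈ RB n, m α • α =
      (∑ α ∈ RD n, m α • α) +
        ∑ α ∈ Finset.univ.image (fun i : Fin n => eps n i), m α • α := by
    rw [← Finset.sum_union RD_disj_eps]; rfl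
  rw [hsplit, Finset.sum_image (fun a _ b _ h => eps_inj h), eps_combo]
  rfl

lemma sum_RB_wt (m : (Fin n → ℤ) → ℕ) :
    ∑ α ∈ RB n, m α = (∑ α ∈ RD n, m α) + ∑ k, gfun m k := by
  have hsplit : ∑ α ∈ RB n, m α =
      (∑ α ∈ RD n, m α) + ∑ α ∈ Finset.univ.image (fun i : Fin n => eps n i), m α := by
    rw [← Finset.sum_union RD_disj_eps]; rfl
  rw [hsplit, Finset.sum_image (fun a _ b _ h => eps_inj h)]
  rfl

/-- Splitting of the type `B` partition function. -/
lemma Pq_RB_split (β : Fin n → ℤ) {G : Finset (Fin n → ℕ)}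
    (hG : ∀ γ : Fin n → ℕ, (SSet n (RD n) (β - fun i => (γ i : ℤ))).Nonempty → γ ∈ G) :
    Pq n (RB n) β =
      ∑ γ ∈ G, (X : Polynomial ℤ) ^ (∑ i, γ i) *
        Pq n (RD n) (β - fun i => (γ i : ℤ)) := by
  classical
  have hsum : ∀ γ ∈ G, (X : Polynomial ℤ) ^ (∑ i, γ i) * Pq n (RD n) (β - fun i => (γ i : ℤ))
      = ∑ m' ∈ (SSet_finite hRD_wt (β - fun i => (γ i : ℤ))).toFinset,
          (X : Polynomial ℤ) ^ ((∑ i, γ i) + ∑ α ∈ RD n, m' α) := by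
    intro γ _
    rw [Pq_eq_sum hRD_wt, Finset.mul_sum]
    exact Finset.sum_congr rfl fun m' _ => by rw [pow_add]
  rw [Finset.sum_congr rfl hsum, Pq_eq_sum hRB_wt]
  rw [← Finset.sum_sigma (G) (fun γ => (SSet_finite hRD_wt (β - fun i => (γ i : ℤ))).toFinset)
      (fun p => (X : Polynomial ℤ) ^ ((∑ i, p.1 i) + ∑ α ∈ RD n, p.2 α))]
  refine Finset.sum_bij' (i := fun m _ => ⟨gfun m, resfun m⟩)
    (j := fun p _ => jfun p.1 p.2) ?_ ?_ ?_ ?_ ?_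
  · -- membership forward
    intro m hm
    rw [Set.Finite.mem_toFinset] at hm
    have hres : resfun m ∈ SSet n (RD n) (β - fun i => ((gfun m i : ℤ))) := by
      constructor
      · intro α hα; simp [resfun, hα]
      · have h2 := hm.2
        rw [sum_RB_eq m] at h2
        have hre : ∑ α ∈ RD n, resfun m α • α = ∑ α ∈ RD n, m α • α :=
          Finset.sum_congr rfl fun α hα => by rw [resfun, if_pos hα]
        rw [hre, ← h2]
        funext i; simp
    rw [Finset.mem_sigma]
    exact ⟨hG _ ⟨_, hres⟩, Set.Finite.mem_toFinset _ |>.mpr hres⟩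
  · -- membership backward
    intro p hp
    rw [Finset.mem_sigma, Set.Finite.mem_toFinset] at hp
    rw [Set.Finite.mem_toFinset]
    obtain ⟨hp1, hp2⟩ := hp
    have hj1 : gfun (jfun p.1 p.2) = p.1 := by
      funext k
      show p.2 (eps n k) + (∑ k', if eps n k = eps n k' then p.1 k' else 0) = p.1 k
      rw [hp2.1 (eps n k) (eps_not_mem_RD k), zero_add, sum_if_eps]
    constructor
    · intro α hα
      have hαD : α ∉ RD n := fun h => hα (Finset.mem_union_left _ h)
      have hαE : ∀ k, α ≠ eps n k := by
        intro k he
        exact hα (Finset.mem_union_right _ (Finset.mem_image.mpr ⟨k, Finset.mem_univ k, he.symm⟩))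
      show p.2 α + (∑ k, if α = eps n k then p.1 k else 0) = 0
      rw [hp2.1 α hαD, sum_if_eps_zero _ hαE]
    · rw [sum_RB_eq (jfun p.1 p.2), hj1]
      have hD : ∑ α ∈ RD n, jfun p.1 p.2 α • α = ∑ α ∈ RD n, p.2 α • α := by
        refine Finset.sum_congr rfl fun α hα => ?_
        have hz : (∑ k, if α = eps n k then p.1 k else 0) = 0 :=
          sum_if_eps_zero _ (ne_eps_of_mem_RD hα)
        show (p.2 α + ∑ k, if α = eps n k then p.1 k else 0) • α = p.2 α • α
        rw [hz, add_zero]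
      rw [hD, hp2.2]
      funext i; simp
  · -- left inverse : j (i m) = m
    intro m hm
    rw [Set.Finite.mem_toFinset] at hm
    funext α
    show resfun m α + (∑ k, if α = eps n k then gfun m k else 0) = m α
    by_cases hD : α ∈ RD n
    · rw [resfun, if_pos hD, sum_if_eps_zero _ (ne_eps_of_mem_RD hD), add_zero]
    · by_cases hE : ∃ k, α = eps n k
      · obtain ⟨k, rfl⟩ := hE
        rw [resfun, if_neg hD, zero_add, sum_if_eps]
        rfl
      · push_neg at hE
        have hRB : α ∉ RB n := by
          rw [mem_RB_iff]; push_neg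
          exact ⟨hD, fun k => hE k⟩
        rw [resfun, if_neg hD, sum_if_eps_zero _ hE, hm.1 α hRB]
  · -- right inverse : i (j p) = p
    intro p hp
    rw [Finset.mem_sigma, Set.Finite.mem_toFinset] at hp
    obtain ⟨hp1, hp2⟩ := hp
    have h1 : gfun (jfun p.1 p.2) = p.1 := by
      funext k
      show p.2 (eps n k) + (∑ k', if eps n k = eps n k' then p.1 k' else 0) = p.1 k
      rw [hp2.1 (eps n k) (eps_not_mem_RD k), zero_add, sum_if_eps]
    have h2 : resfun (jfun p.1 p.2) = p.2 := by
      funext α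
      unfold resfun
      by_cases hD : α ∈ RD n
      · rw [if_pos hD]
        show p.2 α + _ = p.2 α
        rw [sum_if_eps_zero _ (ne_eps_of_mem_RD hD), add_zero]
      · rw [if_neg hD, hp2.1 α hD]
    exact Sigma.ext h1 (heq_of_eq h2)
  · -- value equality
    intro m hm
    rw [Set.Finite.mem_toFinset] at hm
    show _ = (X : Polynomial ℤ) ^ ((∑ i, gfun m i) + ∑ α ∈ RD n, resfun m α)
    congr 1
    have hres : ∑ α ∈ RD n, resfun m α = ∑ α ∈ RD n, m α :=
      Finset.sum_congr rfl fun α hα => by rw [resfun, if_pos hα]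
    rw [sum_RB_wt m, hres, add_comm]

end Kaux

namespace Kaux

variable {n : ℕ}

lemma strictAnti_step {f : Fin n → ℤ} (hf : StrictAnti f) :
    ∀ i j : Fin n, i ≤ j → f j + ((j : ℕ) : ℤ) ≤ f i + ((i : ℕ) : ℤ) := by
  have key : ∀ k : ℕ, ∀ i j : Fin n, (j : ℕ) = (i : ℕ) + k →
      f j + ((j : ℕ) : ℤ) ≤ f i + ((i : ℕ) : ℤ) := by
    intro k
    induction k with
    | zero =>
      intro i j h
      have : j = i := Fin.ext (by omega)
      subst this
      exact le_rfl
    | succ k ih =>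
      intro i j h
      have hjn := j.isLt
      have hlt : (i : ℕ) + k < n := by omega
      set j' : Fin n := ⟨(i : ℕ) + k, hlt⟩ with hj'
      have h1 := ih i j' rfl
      have hlt2 : j' < j := by
        rw [Fin.lt_iff_val_lt_val]; simp [hj']; omega
      have h2 : f j < f j' := hf hlt2
      have : ((j : ℕ) : ℤ) = ((j' : ℕ) : ℤ) + 1 := by simp [hj']; omega
      omega
  intro i j hij
  exact key ((j : ℕ) - (i : ℕ)) i j (by omega)

/-- the permutation sorting `η` into (weakly) decreasing order -/
def tauOf (η : Fin n → ℤ) : Equiv.Perm (Fin n) :=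
  (Fin.revPerm.trans (Tuple.sort η)).symm

/-- the decreasing rearrangement of `η`, minus `ρ` -/
def nuOf (n : ℕ) (η : Fin n → ℤ) : Fin n → ℤ :=
  fun i => η ((Fin.revPerm.trans (Tuple.sort η)) i) - rho n i

lemma nuOf_add_rho (η : Fin n → ℤ) (i : Fin n) :
    nuOf n η (tauOf η i) + rho n (tauOf η i) = η ((Fin.revPerm.trans (Tuple.sort η)) (tauOf η i)) := by
  simp [nuOf]

lemma nuOf_spec (η : Fin n → ℤ) (i : Fin n) :
    η i = nuOf n η (tauOf η i) + rho n (tauOf η i) := by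
  rw [nuOf_add_rho]
  rw [tauOf, Equiv.apply_symm_apply]

lemma rev_strictAnti : StrictAnti (Fin.rev : Fin n → Fin n) := by
  intro i j hij
  exact Fin.rev_lt_rev.mpr hij

lemma sorted_strictAnti {η : Fin n → ℤ} (hη : Function.Injective η) :
    StrictAnti (fun i => η ((Fin.revPerm.trans (Tuple.sort η)) i)) := by
  have hmono : Monotone (η ∘ Tuple.sort η) := Tuple.monotone_sort η
  have hinj : Function.Injective (η ∘ Tuple.sort η) :=
    hη.comp (Tuple.sort η).injective
  have hsm : StrictMono (η ∘ Tuple.sort η) := hmono.strictMono_of_injective hinj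
  intro i j hij
  exact hsm (rev_strictAnti hij)

lemma nuOf_antitone {η : Fin n → ℤ} (hη : Function.Injective η) :
    Antitone (nuOf n η) := by
  intro i j hij
  have hsa := sorted_strictAnti hη
  have := strictAnti_step hsa i j hij
  have hii := i.isLt; have hjj := j.isLt
  simp only [nuOf, rho]
  omega

lemma strictAnti_nu_add_rho {ν : Fin n → ℤ} (hν : Antitone ν) :
    StrictAnti (fun i => ν i + rho n i) := by
  intro i j hij
  have h1 := hν (le_of_lt hij)
  have h2 := rho_strictAnti hij
  show ν j + rho n j < ν i + rho n i
  omega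

/-- uniqueness of the decreasing-rearrangement decomposition -/
lemma decomp_unique {f₁ f₂ : Fin n → ℤ} (h₁ : StrictAnti f₁) (h₂ : StrictAnti f₂)
    {τ₁ τ₂ : Equiv.Perm (Fin n)} (h : ∀ i, f₁ (τ₁ i) = f₂ (τ₂ i)) :
    f₁ = f₂ ∧ τ₁ = τ₂ := by
  have hr : Set.range f₁ = Set.range f₂ := by
    ext x
    constructor
    · rintro ⟨i, rfl⟩
      exact ⟨τ₂ (τ₁.symm i), by rw [← h (τ₁.symm i), Equiv.apply_symm_apply]⟩
    · rintro ⟨i, rfl⟩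
      exact ⟨τ₁ (τ₂.symm i), by rw [h (τ₂.symm i), Equiv.apply_symm_apply]⟩
  have hf : f₁ = f₂ := (StrictAnti.range_inj (β := Fin n) h₁ h₂).mp hr
  refine ⟨hf, ?_⟩
  subst hf
  ext i
  have := h₁.injective (h i)
  rw [this]

end Kaux

namespace Kaux

variable {n : ℕ}

open Classical in
/-- pick an element of a finset of `Fin n` (the min if nonempty) -/
def pick (hn : 0 < n) (s : Finset (Fin n)) : Fin n :=
  if h : s.Nonempty then s.min' h else ⟨0, hn⟩

lemma pick_mem (hn : 0 < n) {s : Finset (Fin n)} (h : s.Nonempty) : pick hn s ∈ s := by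
  rw [pick, dif_pos h]
  exact s.min'_mem h

open Classical in
def iIdx (hn : 0 < n) (η : Fin n → ℤ) : Fin n :=
  pick hn (Finset.univ.filter fun i => ∃ j, j ≠ i ∧ η j = η i)

open Classical in
def jIdx (hn : 0 < n) (η : Fin n → ℤ) : Fin n :=
  pick hn (Finset.univ.filter fun j => j ≠ iIdx hn η ∧ η j = η (iIdx hn η))

lemma swp_spec (hn : 0 < n) {η : Fin n → ℤ} (h : ¬ Function.Injective η) :
    jIdx hn η ≠ iIdx hn η ∧ η (jIdx hn η) = η (iIdx hn η) := by
  classical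
  rw [Function.not_injective_iff] at h
  obtain ⟨a, b, hab, hne⟩ := h
  have h1 : (Finset.univ.filter fun i => ∃ j, j ≠ i ∧ η j = η i).Nonempty := by
    refine ⟨b, Finset.mem_filter.mpr ⟨Finset.mem_univ _, a, hne, hab⟩⟩
  have h2 := pick_mem hn h1
  rw [Finset.mem_filter] at h2
  obtain ⟨-, j, hj1, hj2⟩ := h2
  have h3 : (Finset.univ.filter fun j => j ≠ iIdx hn η ∧ η j = η (iIdx hn η)).Nonempty :=
    ⟨j, Finset.mem_filter.mpr ⟨Finset.mem_univ _, hj1, hj2⟩⟩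
  have h4 := pick_mem hn h3
  rw [Finset.mem_filter] at h4
  exact ⟨h4.2.1, h4.2.2⟩

/-- the canonical transposition attached to a non-injective `η` -/
def swp (hn : 0 < n) (η : Fin n → ℤ) : Equiv.Perm (Fin n) :=
  Equiv.swap (iIdx hn η) (jIdx hn η)

lemma eta_swp (hn : 0 < n) {η : Fin n → ℤ} (h : ¬ Function.Injective η) :
    η ∘ (swp hn η) = η := by
  obtain ⟨hne, heq⟩ := swp_spec hn h
  funext k
  simp only [Function.comp_apply, swp]
  rcases eq_or_ne k (iIdx hn η) with rfl | h1
  · rw [Equiv.swap_apply_left, heq]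
  · rcases eq_or_ne k (jIdx hn η) with rfl | h2
    · rw [Equiv.swap_apply_right, heq]
    · rw [Equiv.swap_apply_of_ne_of_ne h1 h2]

lemma swp_swp (hn : 0 < n) (η : Fin n → ℤ) :
    (swp hn η).trans (swp hn η) = Equiv.refl _ := by
  ext k
  simp [swp, Equiv.swap_apply_self]

lemma sign_swp (hn : 0 < n) {η : Fin n → ℤ} (h : ¬ Function.Injective η) :
    Equiv.Perm.sign (swp hn η) = -1 :=
  Equiv.Perm.sign_swap (swp_spec hn h).1.symm

lemma swp_ne_refl (hn : 0 < n) {η : Fin n → ℤ} (h : ¬ Function.Injective η)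
    (σ : Equiv.Perm (Fin n)) : (swp hn η).trans σ ≠ σ := by
  intro hc
  obtain ⟨hne, -⟩ := swp_spec hn h
  have := congrFun (congrArg (fun e : Equiv.Perm (Fin n) => (e : Fin n → Fin n)) hc) (iIdx hn η)
  simp only [Equiv.coe_trans, Function.comp_apply, swp, Equiv.swap_apply_left] at this
  exact hne (σ.injective this)

lemma sign_trans_swp (hn : 0 < n) {η : Fin n → ℤ} (h : ¬ Function.Injective η)
    (σ : Equiv.Perm (Fin n)) :
    (Equiv.Perm.sign ((swp hn η).trans σ) : ℤ) = - (Equiv.Perm.sign σ : ℤ) := by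
  have : (swp hn η).trans σ = σ * (swp hn η) := rfl
  rw [this, Equiv.Perm.sign_mul, sign_swp hn h]
  simp

end Kaux

namespace Kaux

variable {n : ℕ}

def Lam (n : ℕ) (lam : Fin n → ℤ) : ℤ := ∑ i, lam i

def Wb (n : ℕ) (lam : Fin n → ℤ) : ℕ := ((Lam n lam + n) * (1 + n * n)).toNat

def Gstar (n : ℕ) (lam : Fin n → ℤ) : Finset (Fin n → ℕ) :=
  Fintype.piFinset fun _ : Fin n => Finset.range (Wb n lam + 1)

def aLo (n : ℕ) (lam : Fin n → ℤ) : ℤ := -((n : ℤ) * (Lam n lam + n))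
def aHi (n : ℕ) (lam : Fin n → ℤ) : ℤ := Lam n lam + n

open Classical in
noncomputable def Nstar (n : ℕ) (lam : Fin n → ℤ) : Finset (Fin n → ℤ) :=
  (Fintype.piFinset fun _ : Fin n => Finset.Icc (aLo n lam) (aHi n lam)).filter
    fun ν => Antitone ν

def etaf (n : ℕ) (lam : Fin n → ℤ) (p : Equiv.Perm (Fin n) × (Fin n → ℕ)) :
    Fin n → ℤ := fun i => (lam + rho n) (p.1 i) - (p.2 i : ℤ)

noncomputable def Uterm (n : ℕ) (lam mu : Fin n → ℤ)
    (p : Equiv.Perm (Fin n) × (Fin n → ℕ)) : Polynomial ℤ :=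
  (Equiv.Perm.sign p.1 : ℤ) •
    ((X : Polynomial ℤ) ^ (∑ i, p.2 i) *
      Pq n (RD n) (fun i => etaf n lam p i - (mu + rho n) i))

noncomputable def Tterm (n : ℕ) (lam mu : Fin n → ℤ)
    (t : (Fin n → ℤ) × Equiv.Perm (Fin n) × Equiv.Perm (Fin n)) : Polynomial ℤ :=
  ((Equiv.Perm.sign t.2.1 : ℤ) *
      indNat n (fun i => (lam + rho n) (t.2.1 i) - (t.1 + rho n) i) *
      (Equiv.Perm.sign t.2.2 : ℤ)) •
    ((X : Polynomial ℤ) ^ (Lam n lam - ∑ i, t.1 i).toNat *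
      Pq n (RD n) (fun i => (t.1 + rho n) (t.2.2 i) - (mu + rho n) i))

section Bounds

variable {lam mu : Fin n → ℤ}

lemma Lam_nonneg (hlam0 : ∀ i, 0 ≤ lam i) : 0 ≤ Lam n lam :=
  Finset.sum_nonneg fun i _ => hlam0 i

lemma lam_le_Lam (hlam0 : ∀ i, 0 ≤ lam i) (i : Fin n) : lam i ≤ Lam n lam :=
  Finset.single_le_sum (fun j _ => hlam0 j) (Finset.mem_univ i)

lemma L_ge_one (hlam0 : ∀ i, 0 ≤ lam i) (i : Fin n) : 1 ≤ (lam + rho n) i := by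
  have := rho_ge_one i; have := hlam0 i
  simp only [Pi.add_apply]; omega

lemma L_le (hlam0 : ∀ i, 0 ≤ lam i) (i : Fin n) : (lam + rho n) i ≤ Lam n lam + n := by
  have := rho_le i; have := lam_le_Lam hlam0 i
  simp only [Pi.add_apply]; omega

lemma indNat_ne_zero {v : Fin n → ℤ} (h : indNat n v ≠ 0) : ∀ i, 0 ≤ v i := by
  unfold indNat at h
  by_contra hc
  rw [if_neg hc] at h
  exact h rfl

lemma indNat_eq_one {v : Fin n → ℤ} (h : ∀ i, 0 ≤ v i) : indNat n v = 1 := by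
  unfold indNat
  rw [if_pos h]

lemma bcoef_ne_zero_exists {ν : Fin n → ℤ} (h : bcoef n lam ν ≠ 0) :
    ∃ σ : Equiv.Perm (Fin n), ∀ i, 0 ≤ (lam + rho n) (σ i) - (ν + rho n) i := by
  obtain ⟨σ, -, hσ⟩ := Finset.exists_ne_zero_of_sum_ne_zero h
  refine ⟨σ, indNat_ne_zero fun hz => hσ ?_⟩
  rw [hz, mul_zero]

lemma KT_ne_zero_exists {R : Finset (Fin n → ℤ)} {ν : Fin n → ℤ} (h : KT n R ν mu ≠ 0) :
    ∃ τ : Equiv.Perm (Fin n),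
      Pq n R (fun i => (ν + rho n) (τ i) - (mu + rho n) i) ≠ 0 := by
  obtain ⟨τ, -, hτ⟩ := Finset.exists_ne_zero_of_sum_ne_zero h
  refine ⟨τ, fun hz => hτ ?_⟩
  rw [hz, smul_zero]

lemma sum_comp_add_rho (w : Fin n → ℤ) (σ : Equiv.Perm (Fin n)) :
    ∑ i, (w + rho n) (σ i) = (∑ i, w i) + ∑ i, rho n i := by
  rw [Equiv.sum_comp σ (w + rho n)]
  simp [Finset.sum_add_distrib]

lemma box_mem (hlam0 : ∀ i, 0 ≤ lam i) {ν : Fin n → ℤ} (hA : Antitone ν)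
    (hup : ∀ i, ν i ≤ aHi n lam) (hsum : 0 ≤ ∑ i, ν i) : ν ∈ Nstar n lam := by
  classical
  rw [Nstar, Finset.mem_filter]
  refine ⟨Fintype.mem_piFinset.mpr fun i => Finset.mem_Icc.mpr ⟨?_, hup i⟩, hA⟩
  -- lower bound
  have hsplit : ν i + ∑ j ∈ Finset.univ.erase i, ν j = ∑ j, ν j :=
    Finset.add_sum_erase _ _ (Finset.mem_univ i)
  have hcard : (Finset.univ.erase i).card = n - 1 := by
    rw [Finset.card_erase_of_mem (Finset.mem_univ i), Finset.card_univ, Fintype.card_fin]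
  have hbnd : ∑ j ∈ Finset.univ.erase i, ν j ≤ ((n - 1 : ℕ) : ℤ) * aHi n lam := by
    calc ∑ j ∈ Finset.univ.erase i, ν j ≤ (Finset.univ.erase i).card • aHi n lam :=
          Finset.sum_le_card_nsmul _ _ _ fun j _ => hup j
    _ = ((n - 1 : ℕ) : ℤ) * aHi n lam := by rw [hcard, nsmul_eq_mul]
  have hn1 : ((n - 1 : ℕ) : ℤ) ≤ (n : ℤ) := by omega
  have hHi : 0 ≤ aHi n lam := by
    have := Lam_nonneg hlam0; unfold aHi; omega
  have : ((n - 1 : ℕ) : ℤ) * aHi n lam ≤ (n : ℤ) * aHi n lam :=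
    mul_le_mul_of_nonneg_right hn1 hHi
  unfold aLo aHi at *
  omega

/-- membership in `Nstar` for `ν` in the support of the summand -/
lemma support_bound (hlam0 : ∀ i, 0 ≤ lam i) (hmu0 : ∀ i, 0 ≤ mu i)
    {ν : Fin n → ℤ} (hA : Antitone ν) (hb : bcoef n lam ν ≠ 0)
    (hK : KT n (RD n) ν mu ≠ 0) : ν ∈ Nstar n lam := by
  obtain ⟨σ, hσ⟩ := bcoef_ne_zero_exists hb
  have hup : ∀ i, ν i ≤ aHi n lam := by
    intro i
    have h1 := hσ i
    have h2 := L_le hlam0 (σ i)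
    have h3 := rho_ge_one i
    simp only [Pi.add_apply] at h1 h2 ⊢
    unfold aHi
    omega
  obtain ⟨τ, hτ⟩ := KT_ne_zero_exists hK
  obtain ⟨m, hm⟩ := exists_of_Pq_ne_zero hRD_wt hτ
  have hcs := csum_nonneg_of_SD ⟨m, hm⟩
  have hsν : 0 ≤ ∑ i, ν i := by
    have h1 : ∑ i, ((ν + rho n) (τ i) - (mu + rho n) i)
        = (∑ i, ν i) - ∑ i, mu i := by
      rw [Finset.sum_sub_distrib, sum_comp_add_rho,
        show ∑ i, (mu + rho n) i = (∑ i, mu i) + ∑ i, rho n i from by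
          simp [Finset.sum_add_distrib]]
      ring
    rw [h1] at hcs
    have : 0 ≤ ∑ i, mu i := Finset.sum_nonneg fun i _ => hmu0 i
    omega
  exact box_mem hlam0 hA hup hsν

/-- γ's appearing in the splitting of `Pq^B (L∘σ - M)` lie in `Gstar`. -/
lemma gamma_bound (hlam0 : ∀ i, 0 ≤ lam i) (hmu0 : ∀ i, 0 ≤ mu i)
    (σ : Equiv.Perm (Fin n)) (γ : Fin n → ℕ)
    (hne : (SSet n (RD n)
      ((fun i => (lam + rho n) (σ i) - (mu + rho n) i) - fun i => (γ i : ℤ))).Nonempty) :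
    γ ∈ Gstar n lam := by
  classical
  obtain ⟨m, hm⟩ := hne
  set β : Fin n → ℤ := fun i => (lam + rho n) (σ i) - (mu + rho n) i with hβ
  set δ : Fin n → ℤ := β - fun i => (γ i : ℤ) with hδ
  have hwt := SSet_bound hRD_wt hm
  -- coordinatewise lower bound for δ
  have hco : ∀ k, -(∑ α ∈ RD n, (m α : ℤ)) ≤ δ k := by
    intro k
    have h1 : δ k = ∑ α ∈ RD n, (m α : ℤ) * α k := by
      rw [← hm.2]
      simp [Finset.sum_apply, nsmul_eq_mul]
    rw [h1, ← Finset.sum_neg_distrib]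
    refine Finset.sum_le_sum fun α hα => ?_
    have h2 := coord_RD_ge hα k
    nlinarith [Int.ofNat_nonneg (m α)]
  -- bound for lf ρ δ
  have hlf : lf (rho n) δ ≤ (n : ℤ) * (n : ℤ) * (Lam n lam + n) := by
    have h1 : lf (rho n) δ ≤ lf (rho n) β := by
      rw [hδ, lf_sub]
      have : 0 ≤ lf (rho n) fun i => (γ i : ℤ) := by
        refine Finset.sum_nonneg fun i _ => ?_
        have := rho_ge_one i
        positivity
      omega
    have h2 : lf (rho n) β ≤ (n : ℤ) * (n : ℤ) * (Lam n lam + n) := by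
      unfold lf
      have : ∀ i : Fin n, rho n i * β i ≤ (n : ℤ) * (Lam n lam + n) := by
        intro i
        have hr1 := rho_ge_one i
        have hr2 := rho_le i
        have hb1 : β i ≤ Lam n lam + n := by
          have hL := L_le hlam0 (σ i)
          have h3 := rho_ge_one i
          have h4 := hmu0 i
          have hβi : β i = lam (σ i) + rho n (σ i) - (mu i + rho n i) := rfl
          simp only [Pi.add_apply] at hL
          omega
        have hLn : 0 ≤ Lam n lam + n := by
          have := Lam_nonneg hlam0; omega
        rcases le_or_gt (β i) 0 with hb0 | hb0
        · nlinarith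
        · nlinarith
      calc ∑ i, rho n i * β i ≤ ∑ _i : Fin n, (n : ℤ) * (Lam n lam + n) :=
            Finset.sum_le_sum fun i _ => this i
      _ = (n : ℤ) * ((n : ℤ) * (Lam n lam + n)) := by
            rw [Finset.sum_const, Finset.card_univ, Fintype.card_fin, nsmul_eq_mul]
      _ = (n : ℤ) * (n : ℤ) * (Lam n lam + n) := by ring
    omega
  -- now bound each γ k
  rw [Gstar, Fintype.mem_piFinset]
  intro k
  rw [Finset.mem_range]
  have h3 : (γ k : ℤ) = β k - δ k := by simp [hδ]
  have h4 : β k ≤ Lam n lam + n := by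
    have hL := L_le hlam0 (σ k)
    have h5 := rho_ge_one k
    have h6 := hmu0 k
    have hβk : β k = lam (σ k) + rho n (σ k) - (mu k + rho n k) := rfl
    simp only [Pi.add_apply] at hL
    omega
  have h7 := hco k
  have h8 : (γ k : ℤ) ≤ (Lam n lam + n) + (n : ℤ) * (n : ℤ) * (Lam n lam + n) := by omega
  have h9 : (Lam n lam + n) + (n : ℤ) * (n : ℤ) * (Lam n lam + n)
      = (Lam n lam + n) * (1 + n * n) := by ring
  rw [h9] at h8
  unfold Wb
  omega

end Bounds

end Kaux

namespace Kaux

variable {n : ℕ} {lam mu : Fin n → ℤ}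

lemma lhs_expand (hlam0 : ∀ i, 0 ≤ lam i) (hmu0 : ∀ i, 0 ≤ mu i) :
    KT n (RB n) lam mu =
      ∑ p ∈ Finset.univ ×ˢ Gstar n lam, Uterm n lam mu p := by
  rw [KT, Finset.sum_product]
  refine Finset.sum_congr rfl fun σ _ => ?_
  rw [Pq_RB_split (fun i => (lam + rho n) (σ i) - (mu + rho n) i)
      (fun γ hγ => gamma_bound hlam0 hmu0 σ γ hγ), Finset.smul_sum]
  refine Finset.sum_congr rfl fun γ _ => ?_
  have harg : ((fun i => (lam + rho n) (σ i) - (mu + rho n) i) - fun i => (γ i : ℤ))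
      = fun i => (lam + rho n) (σ i) - (γ i : ℤ) - (mu + rho n) i := by
    funext i
    simp only [Pi.sub_apply]
    ring
  rw [harg]
  rfl

lemma cancel (hn : 0 < n) :
    ∑ p ∈ (Finset.univ ×ˢ Gstar n lam).filter
        (fun p => ¬ Function.Injective (etaf n lam p)), Uterm n lam mu p = 0 := by
  classical
  refine Finset.sum_involution
    (g := fun p _ => ((swp hn (etaf n lam p)).trans p.1, p.2 ∘ (swp hn (etaf n lam p)))) ?_ ?_ ?_ ?_
  · -- f a + f (g a) = 0
    intro p hp
    rw [Finset.mem_filter] at hp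
    have hni : ¬ Function.Injective (etaf n lam p) := hp.2
    have heta : etaf n lam ((swp hn (etaf n lam p)).trans p.1, p.2 ∘ swp hn (etaf n lam p))
        = etaf n lam p := by
      funext k
      show (lam + rho n) (p.1 (swp hn (etaf n lam p) k))
          - (p.2 (swp hn (etaf n lam p) k) : ℤ) = etaf n lam p k
      have := congrFun (eta_swp hn hni) k
      simpa [etaf] using this
    unfold Uterm
    rw [heta]
    have hsg := sign_trans_swp hn hni p.1
    rw [hsg]
    have hsum : ∑ i, (p.2 ∘ swp hn (etaf n lam p)) i = ∑ i, p.2 i :=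
      Equiv.sum_comp (swp hn (etaf n lam p)) p.2
    show _ + _ = 0
    rw [hsum]
    rw [neg_smul]
    exact add_neg_cancel _
  · -- g a ≠ a when f a ≠ 0
    intro p hp _
    intro hc
    exact swp_ne_refl hn (Finset.mem_filter.mp hp).2 p.1 (congrArg Prod.fst hc)
  · -- g a ∈ s
    intro p hp
    rw [Finset.mem_filter] at hp ⊢
    have hni := hp.2
    have heta : etaf n lam ((swp hn (etaf n lam p)).trans p.1, p.2 ∘ swp hn (etaf n lam p))
        = etaf n lam p := by
      funext k
      show (lam + rho n) (p.1 (swp hn (etaf n lam p) k))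
          - (p.2 (swp hn (etaf n lam p) k) : ℤ) = etaf n lam p k
      have := congrFun (eta_swp hn hni) k
      simpa [etaf] using this
    constructor
    · rw [Finset.mem_product]
      refine ⟨Finset.mem_univ _, ?_⟩
      have hg := (Finset.mem_product.mp hp.1).2
      simp only [Gstar, Fintype.mem_piFinset] at hg ⊢
      exact fun i => hg _
    · rw [heta]; exact hni
  · -- involution
    intro p hp
    have hni := (Finset.mem_filter.mp hp).2
    have heta : etaf n lam ((swp hn (etaf n lam p)).trans p.1, p.2 ∘ swp hn (etaf n lam p))
        = etaf n lam p := by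
      funext k
      show (lam + rho n) (p.1 (swp hn (etaf n lam p) k))
          - (p.2 (swp hn (etaf n lam p) k) : ℤ) = etaf n lam p k
      have := congrFun (eta_swp hn hni) k
      simpa [etaf] using this
    ext1
    · show (swp hn (etaf n lam _)).trans ((swp hn (etaf n lam p)).trans p.1) = p.1
      rw [heta, ← Equiv.trans_assoc, swp_swp, Equiv.refl_trans]
    · show (p.2 ∘ swp hn (etaf n lam p)) ∘ swp hn (etaf n lam _) = p.2
      rw [heta]
      funext k
      have := congrFun (congrArg (fun e : Equiv.Perm (Fin n) => (e : Fin n → Fin n))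
        (swp_swp hn (etaf n lam p))) k
      simp only [Equiv.coe_trans, Function.comp_apply, Equiv.coe_refl, id_eq] at this
      simp [Function.comp_apply, this]

end Kaux

namespace Kaux

variable {n : ℕ} {lam mu : Fin n → ℤ}

lemma Uterm_ne_zero {p : Equiv.Perm (Fin n) × (Fin n → ℕ)} (h : Uterm n lam mu p ≠ 0) :
    Pq n (RD n) (fun i => etaf n lam p i - (mu + rho n) i) ≠ 0 := by
  intro hz
  apply h
  unfold Uterm
  rw [hz, mul_zero, smul_zero]

lemma Tterm_ne_zero {t : (Fin n → ℤ) × Equiv.Perm (Fin n) × Equiv.Perm (Fin n)}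
    (h : Tterm n lam mu t ≠ 0) :
    (∀ i, 0 ≤ (lam + rho n) (t.2.1 i) - (t.1 + rho n) i) ∧
      Pq n (RD n) (fun i => (t.1 + rho n) (t.2.2 i) - (mu + rho n) i) ≠ 0 := by
  constructor
  · refine indNat_ne_zero fun hz => h ?_
    unfold Tterm
    rw [hz, mul_zero, zero_mul, zero_smul]
  · intro hz
    apply h
    unfold Tterm
    rw [hz, mul_zero, smul_zero]

lemma nuOf_add_rho_strictAnti {η : Fin n → ℤ} (hinj : Function.Injective η) :
    StrictAnti (fun k => nuOf n η k + rho n k) := by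
  have h1 : (fun k => nuOf n η k + rho n k)
      = fun k => η ((Fin.revPerm.trans (Tuple.sort η)) k) := by
    funext k
    simp [nuOf]
  rw [h1]
  exact sorted_strictAnti hinj

lemma nuOf_spec' (η : Fin n → ℤ) (i : Fin n) :
    (fun k => nuOf n η k + rho n k) (tauOf η i) = η i := (nuOf_spec η i).symm

lemma sign_cancel (σ' τ : Equiv.Perm (Fin n)) :
    (Equiv.Perm.sign (τ.symm.trans σ') : ℤ) * (Equiv.Perm.sign τ : ℤ)
      = (Equiv.Perm.sign σ' : ℤ) := by
  have h1 : τ.symm.trans σ' = σ' * τ⁻¹ := rfl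
  have h2 : (Equiv.Perm.sign τ : ℤ) * (Equiv.Perm.sign τ : ℤ) = 1 := by
    rcases Int.units_eq_one_or (Equiv.Perm.sign τ) with h | h <;> rw [h] <;> norm_num
  rw [h1, Equiv.Perm.sign_mul, Equiv.Perm.sign_inv]
  push_cast [Units.val_mul]
  rw [mul_assoc, h2, mul_one]

lemma eta_sum_int (p : Equiv.Perm (Fin n) × (Fin n → ℕ)) :
    ∑ i, etaf n lam p i = Lam n lam + (∑ i, rho n i) - ∑ i, (p.2 i : ℤ) := by
  unfold etaf
  rw [Finset.sum_sub_distrib, sum_comp_add_rho]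
  rfl

/-- the value identity between `Uterm` and `Tterm` at a sorted decomposition -/
lemma value_eq {p : Equiv.Perm (Fin n) × (Fin n → ℕ)}
    (hinj : Function.Injective (etaf n lam p)) :
    Uterm n lam mu p = Tterm n lam mu
      (nuOf n (etaf n lam p), (tauOf (etaf n lam p)).symm.trans p.1, tauOf (etaf n lam p)) := by
  classical
  set η := etaf n lam p with hη
  set τ₀ := tauOf η with hτ₀
  set ν₀ := nuOf n η with hν₀
  have hspec : ∀ i, ν₀ (τ₀ i) + rho n (τ₀ i) = η i := fun i => nuOf_spec' η i
  have hspec2 : ∀ i, (ν₀ + rho n) (τ₀ i) = η i := fun i => by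
    rw [Pi.add_apply]; exact hspec i
  have hspec3 : ∀ i, (ν₀ + rho n) i = η (τ₀.symm i) := fun i => by
    rw [← hspec2 (τ₀.symm i), Equiv.apply_symm_apply]
  have hγ : ∀ k, (p.2 k : ℤ) = (lam + rho n) (p.1 k) - η k := by
    intro k
    have : η k = (lam + rho n) (p.1 k) - (p.2 k : ℤ) := rfl
    omega
  unfold Tterm
  simp only
  -- indicator is 1
  have hind : indNat n (fun i => (lam + rho n) ((τ₀.symm.trans p.1) i) - (ν₀ + rho n) i) = 1 := by
    refine indNat_eq_one fun i => ?_
    have h1 : (lam + rho n) ((τ₀.symm.trans p.1) i) = (lam + rho n) (p.1 (τ₀.symm i)) := rfl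
    rw [h1, hspec3 i, ← hγ (τ₀.symm i)]
    positivity
  rw [hind, mul_one]
  rw [sign_cancel p.1 τ₀]
  -- exponents
  have hexp : (∑ i, p.2 i) = (Lam n lam - ∑ i, ν₀ i).toNat := by
    have h1 : ∑ i, η i = (∑ i, ν₀ i) + ∑ i, rho n i := by
      rw [← sum_comp_add_rho ν₀ τ₀]
      exact Finset.sum_congr rfl fun i _ => (hspec2 i).symm
    have h2 := eta_sum_int (lam := lam) p
    rw [← hη] at h2
    have h3 : ((∑ i, p.2 i : ℕ) : ℤ) = ∑ i, (p.2 i : ℤ) := by push_cast; rfl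
    omega
  rw [← hexp]
  -- the Pq arguments agree
  have harg : (fun i => (ν₀ + rho n) (τ₀ i) - (mu + rho n) i)
      = fun i => η i - (mu + rho n) i := by
    funext i
    rw [hspec2 i]
  rw [harg]
  rfl

end Kaux

namespace Kaux

variable {n : ℕ} {lam mu : Fin n → ℤ}

lemma eta_le (hlam0 : ∀ i, 0 ≤ lam i) (p : Equiv.Perm (Fin n) × (Fin n → ℕ)) (i : Fin n) :
    etaf n lam p i ≤ Lam n lam + n := by
  have h1 := L_le hlam0 (p.1 i)
  have h2 : (0 : ℤ) ≤ (p.2 i : ℤ) := Int.ofNat_nonneg _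
  unfold etaf
  omega

/-- membership of the sorted `ν` in the box, given a nonzero `Uterm` -/
lemma nu_mem_Nstar (hlam0 : ∀ i, 0 ≤ lam i) (hmu0 : ∀ i, 0 ≤ mu i)
    {p : Equiv.Perm (Fin n) × (Fin n → ℕ)}
    (hinj : Function.Injective (etaf n lam p)) (hU : Uterm n lam mu p ≠ 0) :
    nuOf n (etaf n lam p) ∈ Nstar n lam := by
  set η := etaf n lam p with hη
  have hA : Antitone (nuOf n η) := nuOf_antitone hinj
  have hup : ∀ k, nuOf n η k ≤ aHi n lam := by
    intro k
    have h1 : nuOf n η k + rho n k = η ((tauOf η).symm k) := by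
      rw [← nuOf_spec' η ((tauOf η).symm k), Equiv.apply_symm_apply]
    have h2 := eta_le hlam0 p ((tauOf η).symm k)
    have h3 := rho_ge_one k
    rw [← hη] at h2
    unfold aHi
    omega
  have hP := Uterm_ne_zero hU
  obtain ⟨m, hm⟩ := exists_of_Pq_ne_zero hRD_wt hP
  have hcs := csum_nonneg_of_SD ⟨m, hm⟩
  have hsν : 0 ≤ ∑ i, nuOf n η i := by
    have h1 : ∑ i, η i = (∑ i, nuOf n η i) + ∑ i, rho n i := by
      rw [← sum_comp_add_rho (nuOf n η) (tauOf η)]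
      refine Finset.sum_congr rfl fun i _ => ?_
      rw [Pi.add_apply]
      exact (nuOf_spec' η i).symm
    have h2 : ∑ i, (η i - (mu + rho n) i) = (∑ i, η i) - ((∑ i, mu i) + ∑ i, rho n i) := by
      rw [Finset.sum_sub_distrib]
      simp [Finset.sum_add_distrib]
    rw [h2, h1] at hcs
    have h3 : 0 ≤ ∑ i, mu i := Finset.sum_nonneg fun i _ => hmu0 i
    omega
  exact box_mem hlam0 hA hup hsν

lemma main_bij (hlam0 : ∀ i, 0 ≤ lam i) (hmu0 : ∀ i, 0 ≤ mu i) :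
    ∑ p ∈ (Finset.univ ×ˢ Gstar n lam).filter
        (fun p => Function.Injective (etaf n lam p)), Uterm n lam mu p
      = ∑ t ∈ Nstar n lam ×ˢ Finset.univ ×ˢ Finset.univ, Tterm n lam mu t := by
  classical
  refine Finset.sum_bij_ne_zero
    (i := fun p _ _ => (nuOf n (etaf n lam p),
      (tauOf (etaf n lam p)).symm.trans p.1, tauOf (etaf n lam p))) ?_ ?_ ?_ ?_
  · -- membership
    intro p h₁ h₂
    have hinj := (Finset.mem_filter.mp h₁).2
    rw [Finset.mem_product]
    exact ⟨nu_mem_Nstar hlam0 hmu0 hinj h₂,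
      Finset.mem_product.mpr ⟨Finset.mem_univ _, Finset.mem_univ _⟩⟩
  · -- injectivity
    intro p₁ h₁₁ h₁₂ p₂ h₂₁ h₂₂ heq
    have e1 : nuOf n (etaf n lam p₁) = nuOf n (etaf n lam p₂) := congrArg Prod.fst heq
    have e3 : tauOf (etaf n lam p₁) = tauOf (etaf n lam p₂) :=
      congrArg (fun t => t.2.2) heq
    have e2 : (tauOf (etaf n lam p₁)).symm.trans p₁.1
        = (tauOf (etaf n lam p₂)).symm.trans p₂.1 := congrArg (fun t => t.2.1) heq
    have hη : etaf n lam p₁ = etaf n lam p₂ := by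
      funext i
      rw [← nuOf_spec' (etaf n lam p₁) i, ← nuOf_spec' (etaf n lam p₂) i, e1, e3]
    have hσ : p₁.1 = p₂.1 := by
      have := congrArg (fun e => (tauOf (etaf n lam p₁)).trans e) e2
      simp only [e3] at this
      rwa [← Equiv.trans_assoc, ← Equiv.trans_assoc, Equiv.self_trans_symm,
        Equiv.refl_trans, Equiv.refl_trans] at this
    have hγ : p₁.2 = p₂.2 := by
      funext k
      have c1 : etaf n lam p₁ k = (lam + rho n) (p₁.1 k) - (p₁.2 k : ℤ) := rfl
      have c2 : etaf n lam p₂ k = (lam + rho n) (p₂.1 k) - (p₂.2 k : ℤ) := rfl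
      have := congrFun hη k
      rw [c1, c2, hσ] at this
      omega
    exact Prod.ext hσ hγ
  · -- surjectivity
    intro t ht hT
    obtain ⟨hind, hP⟩ := Tterm_ne_zero hT
    obtain ⟨ν, σ, τ⟩ := t
    simp only at hind hP ⊢
    rw [Finset.mem_product] at ht
    have hν : ν ∈ Nstar n lam := ht.1
    have hA : Antitone ν := (Finset.mem_filter.mp hν).2
    have hbox : ∀ i, aLo n lam ≤ ν i ∧ ν i ≤ aHi n lam := by
      intro i
      have := Fintype.mem_piFinset.mp (Finset.mem_filter.mp hν).1 i
      exact Finset.mem_Icc.mp this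
    set σ' := τ.trans σ with hσ'
    have hγz : ∀ k, 0 ≤ (lam + rho n) (σ' k) - (ν + rho n) (τ k) := by
      intro k
      have := hind (τ k)
      exact this
    set γ : Fin n → ℕ := fun k => ((lam + rho n) (σ' k) - (ν + rho n) (τ k)).toNat with hγ
    have hγc : ∀ k, (γ k : ℤ) = (lam + rho n) (σ' k) - (ν + rho n) (τ k) := by
      intro k
      rw [hγ]
      exact Int.toNat_of_nonneg (hγz k)
    set p : Equiv.Perm (Fin n) × (Fin n → ℕ) := (σ', γ) with hp
    have hetap : etaf n lam p = fun k => (ν + rho n) (τ k) := by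
      funext k
      have : etaf n lam p k = (lam + rho n) (σ' k) - (γ k : ℤ) := rfl
      rw [this, hγc k]
      ring
    have hinj : Function.Injective (etaf n lam p) := by
      rw [hetap]
      exact ((strictAnti_nu_add_rho hA).injective).comp τ.injective
    -- γ ∈ Gstar
    have hγG : γ ∈ Gstar n lam := by
      simp only [Gstar, Fintype.mem_piFinset, Finset.mem_range]
      intro k
      have h1 := hγc k
      have h2 := L_le hlam0 (σ' k)
      have h3 : aLo n lam ≤ ν (τ k) := (hbox (τ k)).1
      have h4 := rho_ge_one (τ k)
      have h5 : (ν + rho n) (τ k) = ν (τ k) + rho n (τ k) := rfl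
      have hΛ := Lam_nonneg hlam0
      have h6 : (γ k : ℤ) ≤ (Lam n lam + n) * (1 + (n : ℤ) * n) := by
        have hnn : (n : ℤ) ≤ (n : ℤ) * n := by nlinarith [Int.ofNat_nonneg n]
        have : (γ k : ℤ) ≤ (Lam n lam + n) - (aLo n lam + 1) := by omega
        unfold aLo at this
        nlinarith [this]
      unfold Wb
      omega
    have hmem : p ∈ (Finset.univ ×ˢ Gstar n lam).filter
        (fun p => Function.Injective (etaf n lam p)) := by
      rw [Finset.mem_filter, Finset.mem_product]
      exact ⟨⟨Finset.mem_univ _, hγG⟩, hinj⟩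
    -- the sorting of etaf p recovers (ν, τ)
    have huniq : nuOf n (etaf n lam p) = ν ∧ tauOf (etaf n lam p) = τ := by
      have hsa1 : StrictAnti (fun k => nuOf n (etaf n lam p) k + rho n k) :=
        nuOf_add_rho_strictAnti hinj
      have hsa2 : StrictAnti (fun k => ν k + rho n k) := strictAnti_nu_add_rho hA
      have hcomp : ∀ i, (fun k => nuOf n (etaf n lam p) k + rho n k)
          ((tauOf (etaf n lam p)) i) = (fun k => ν k + rho n k) (τ i) := by
        intro i
        rw [nuOf_spec' (etaf n lam p) i, hetap]
        rfl
      obtain ⟨hf, hτ⟩ := decomp_unique hsa1 hsa2 hcomp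
      refine ⟨?_, hτ⟩
      funext k
      have := congrFun hf k
      omega
    -- Uterm p ≠ 0
    have hUT : Uterm n lam mu p = Tterm n lam mu (ν, σ, τ) := by
      rw [value_eq (mu := mu) hinj, huniq.1, huniq.2]
      rw [show (Equiv.symm τ).trans p.1 = σ from by
        show τ.symm.trans (τ.trans σ) = σ
        rw [← Equiv.trans_assoc, Equiv.symm_trans_self, Equiv.refl_trans]]
    have hU : Uterm n lam mu p ≠ 0 := by
      rw [hUT]
      exact hT
    refine ⟨p, hmem, hU, ?_⟩
    rw [huniq.1, huniq.2]
    rw [show (Equiv.symm τ).trans p.1 = σ from by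
      show τ.symm.trans (τ.trans σ) = σ
      rw [← Equiv.trans_assoc, Equiv.symm_trans_self, Equiv.refl_trans]]
  · -- values
    intro p h₁ h₂
    exact value_eq (Finset.mem_filter.mp h₁).2

end Kaux

namespace Kaux

variable {n : ℕ} {lam mu : Fin n → ℤ}

lemma rhs_expand :
    ∑ ν ∈ Nstar n lam,
        (X : Polynomial ℤ) ^ (Lam n lam - ∑ i, ν i).toNat *
          (bcoef n lam ν • KT n (RD n) ν mu)
      = ∑ t ∈ Nstar n lam ×ˢ Finset.univ ×ˢ Finset.univ, Tterm n lam mu t := by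
  rw [Finset.sum_product]
  refine Finset.sum_congr rfl fun ν _ => ?_
  rw [Finset.sum_product]
  unfold bcoef KT
  rw [Finset.sum_smul, Finset.mul_sum]
  refine Finset.sum_congr rfl fun σ _ => ?_
  rw [Finset.smul_sum, Finset.mul_sum]
  refine Finset.sum_congr rfl fun τ _ => ?_
  unfold Tterm
  simp only
  rw [smul_smul, mul_smul_comm]

lemma main_eq (hn : 0 < n) (hlam0 : ∀ i, 0 ≤ lam i) (hmu0 : ∀ i, 0 ≤ mu i) :
    KT n (RB n) lam mu =
      ∑ ν ∈ Nstar n lam,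
        (X : Polynomial ℤ) ^ (Lam n lam - ∑ i, ν i).toNat *
          (bcoef n lam ν • KT n (RD n) ν mu) := by
  classical
  rw [lhs_expand hlam0 hmu0,
    ← Finset.sum_filter_add_sum_filter_not (Finset.univ ×ˢ Gstar n lam)
      (fun p => Function.Injective (etaf n lam p)) (Uterm n lam mu),
    cancel hn, add_zero, main_bij hlam0 hmu0, rhs_expand]

end Kaux

namespace Kaux

variable {n : ℕ} {lam mu : Fin n → ℤ}

lemma smul_ne_imp {ν : Fin n → ℤ} (h : bcoef n lam ν • KT n (RD n) ν mu ≠ 0) :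
    bcoef n lam ν ≠ 0 ∧ KT n (RD n) ν mu ≠ 0 := by
  constructor
  · intro hz; exact h (by rw [hz, zero_smul])
  · intro hz; exact h (by rw [hz, smul_zero])

end Kaux

/-- for partitions `λ, μ` of length `n` with `|λ| ≥ |μ|`,
`K̃^{B_n}_{λ,μ}(q) = Σ_ν q^{|λ|-|ν|} b_{λ,ν} K̃^{D_n}_{ν,μ}(q)`, where `ν` runs over
the weakly decreasing sequences in `ℤ^n`, only finitely many summands are nonzero,
and every nonzero summand has `|ν| ≤ |λ|`. -/
theorem KtildeB_decomposition (n : ℕ) (hn : 1 ≤ n) (lam mu : Fin n → ℤ)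
    (hlam : Antitone lam) (hlam0 : ∀ i, 0 ≤ lam i)
    (hmu : Antitone mu) (hmu0 : ∀ i, 0 ≤ mu i)
    (hsum : ∑ i, mu i ≤ ∑ i, lam i) :
    {ν : Fin n → ℤ | Antitone ν ∧ bcoef n lam ν • KT n (RD n) ν mu ≠ 0}.Finite ∧
    (∀ ν : Fin n → ℤ, Antitone ν → bcoef n lam ν • KT n (RD n) ν mu ≠ 0 →
      ∑ i, ν i ≤ ∑ i, lam i) ∧
    KT n (RB n) lam mu =
      ∑ᶠ ν ∈ {ν : Fin n → ℤ | Antitone ν},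
        (X : Polynomial ℤ) ^ ((∑ i, lam i) - ∑ i, ν i).toNat *
          (bcoef n lam ν • KT n (RD n) ν mu) := by
  classical
  refine ⟨?_, ?_, ?_⟩
  · -- finiteness
    refine Set.Finite.subset (Kaux.Nstar n lam).finite_toSet ?_
    rintro ν ⟨hA, hne⟩
    obtain ⟨hb, hK⟩ := Kaux.smul_ne_imp hne
    exact Kaux.support_bound hlam0 hmu0 hA hb hK
  · -- sum bound
    intro ν hA hne
    obtain ⟨hb, hK⟩ := Kaux.smul_ne_imp hne
    obtain ⟨σ, hσ⟩ := Kaux.bcoef_ne_zero_exists hb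
    have h1 : ∑ i, (ν + rho n) i ≤ ∑ i, (lam + rho n) (σ i) :=
      Finset.sum_le_sum fun i _ => by linarith [hσ i]
    rw [Kaux.sum_comp_add_rho lam σ] at h1
    have h2 : ∑ i, (ν + rho n) i = (∑ i, ν i) + ∑ i, rho n i := by
      simp [Finset.sum_add_distrib]
    rw [h2] at h1
    omega
  · -- the identity
    have hfin : ∑ᶠ ν ∈ {ν : Fin n → ℤ | Antitone ν},
        (X : Polynomial ℤ) ^ ((∑ i, lam i) - ∑ i, ν i).toNat *
          (bcoef n lam ν • KT n (RD n) ν mu)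
        = ∑ ν ∈ Kaux.Nstar n lam,
            (X : Polynomial ℤ) ^ ((∑ i, lam i) - ∑ i, ν i).toNat *
              (bcoef n lam ν • KT n (RD n) ν mu) := by
      refine finsum_mem_eq_sum_of_inter_support_eq _ ?_
      ext ν
      simp only [Set.mem_inter_iff, Set.mem_setOf_eq, Function.mem_support,
        Finset.mem_coe]
      constructor
      · rintro ⟨hA, hne⟩
        have hs : bcoef n lam ν • KT n (RD n) ν mu ≠ 0 := by
          intro hz
          exact hne (by rw [hz, mul_zero])
        obtain ⟨hb, hK⟩ := Kaux.smul_ne_imp hs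
        exact ⟨Kaux.support_bound hlam0 hmu0 hA hb hK, hne⟩
      · rintro ⟨hν, hne⟩
        exact ⟨(Finset.mem_filter.mp hν).2, hne⟩
    rw [hfin]
    exact Kaux.main_eq hn hlam0 hmu0
end

section
/- Let λ, μ be partitions of length n with |λ| ≤ |μ| and |λ| ≡ |μ| (mod 2). Then u_{λ,μ}(q) = q^{(|μ|−|λ|)/2} Σ_{ν} ( Σ_{σ∈S_n} sgn(σ) d(σ(ν+ρ_n) − (λ+ρ_n)) ) K^{A_{n-1}}_{ν,μ}(q), where ν runs over the partitions of length n with |ν| = |μ|. (If |μ| − |λ| is odd, u_{λ,μ}(q) = 0. The inner coefficient is the paper's alternating-sum expression for the multiplicity of the rational GL_n-module of highest weight λ in the restriction of the so_{2n}-module of highest weight ν.) -/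
open Finset Polynomial

noncomputable section Aux
namespace UDec

open Function

variable {n : ℕ}

def Δ (n : ℕ) (b : Fin n × Fin n → ℕ) : Fin n → ℤ :=
  ∑ p ∈ pairsLt n, b p • (eps n p.1 + eps n p.2)

def ΔA (n : ℕ) (a : Fin n × Fin n → ℕ) : Fin n → ℤ :=
  ∑ p ∈ pairsLt n, a p • (eps n p.1 - eps n p.2)

def Tot (n : ℕ) (b : Fin n × Fin n → ℕ) : ℕ := ∑ p ∈ pairsLt n, b p

lemma eps_apply (j i : Fin n) : eps n j i = if i = j then 1 else 0 := Pi.single_apply ..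

lemma sum_eps (j : Fin n) : ∑ i, eps n j i = 1 := by
  simp [eps_apply]

lemma mem_pairsLt {p : Fin n × Fin n} : p ∈ pairsLt n ↔ p.1 < p.2 := by
  simp [pairsLt]

lemma Δ_apply (b : Fin n × Fin n → ℕ) (i : Fin n) :
    Δ n b i = ∑ p ∈ pairsLt n, (b p : ℤ) * (eps n p.1 i + eps n p.2 i) := by
  simp only [Δ, Finset.sum_apply, Pi.smul_apply, Pi.add_apply, smul_eq_mul, nsmul_eq_mul]
  exact Finset.sum_congr rfl fun p _ => by simp [Pi.mul_apply]

lemma ΔA_apply (a : Fin n × Fin n → ℕ) (i : Fin n) :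
    ΔA n a i = ∑ p ∈ pairsLt n, (a p : ℤ) * (eps n p.1 i - eps n p.2 i) := by
  simp only [ΔA, Finset.sum_apply, Pi.smul_apply, Pi.sub_apply, smul_eq_mul, nsmul_eq_mul]
  exact Finset.sum_congr rfl fun p _ => by simp [Pi.mul_apply]

lemma Δ_nonneg (b : Fin n × Fin n → ℕ) (i : Fin n) : 0 ≤ Δ n b i := by
  rw [Δ_apply]
  refine Finset.sum_nonneg fun p _ => ?_
  have h1 : (0:ℤ) ≤ eps n p.1 i := by rw [eps_apply]; split <;> norm_num
  have h2 : (0:ℤ) ≤ eps n p.2 i := by rw [eps_apply]; split <;> norm_num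
  positivity

lemma sum_Δ (b : Fin n × Fin n → ℕ) : ∑ i, Δ n b i = 2 * (Tot n b : ℤ) := by
  simp only [Δ_apply]
  rw [Finset.sum_comm]
  have : ∀ p ∈ pairsLt n, ∑ i, (b p : ℤ) * (eps n p.1 i + eps n p.2 i) = 2 * (b p : ℤ) := by
    intro p _
    rw [← Finset.mul_sum, Finset.sum_add_distrib, sum_eps, sum_eps]
    ring
  rw [Finset.sum_congr rfl this, Tot]
  push_cast [Finset.mul_sum]
  rfl

lemma sum_ΔA (a : Fin n × Fin n → ℕ) : ∑ i, ΔA n a i = 0 := by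
  simp only [ΔA_apply]
  rw [Finset.sum_comm]
  refine Finset.sum_eq_zero fun p _ => ?_
  rw [← Finset.mul_sum, Finset.sum_sub_distrib, sum_eps, sum_eps]
  ring

end UDec
end Aux
namespace UDec
variable {n : ℕ}

/-- root map for type A -/
def rootA (n : ℕ) (p : Fin n × Fin n) : Fin n → ℤ := eps n p.1 - eps n p.2

lemma rootA_injOn {p q : Fin n × Fin n} (hp : p ∈ pairsLt n) (hq : q ∈ pairsLt n)
    (h : rootA n p = rootA n q) : p = q := by
  rw [mem_pairsLt] at hp hq
  have hne : p.1 ≠ p.2 := ne_of_lt hp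
  have hne' : q.1 ≠ q.2 := ne_of_lt hq
  have h1 := congrFun h p.1
  have h2 := congrFun h p.2
  simp only [rootA, Pi.sub_apply, eps_apply] at h1 h2
  have e1 : p.1 = q.1 := by
    by_cases c1 : p.1 = q.1
    · exact c1
    · exfalso; split_ifs at h1 h2 <;> simp_all
  have e2 : p.2 = q.2 := by
    by_cases c2 : p.2 = q.2
    · exact c2
    · exfalso; split_ifs at h1 h2 <;> simp_all
  exact Prod.ext e1 e2

lemma sum_rootA (p : Fin n × Fin n) : ∑ i, rootA n p i = 0 := by
  simp [rootA, Finset.sum_sub_distrib, sum_eps]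

lemma mem_RA {α : Fin n → ℤ} : α ∈ RA n ↔ ∃ p ∈ pairsLt n, rootA n p = α := by
  simp [RA, rootA]

/-- Pq over RA as a sum over families indexed by pairs. -/
lemma Pq_RA (γ : Fin n → ℤ) :
    Pq n (RA n) γ =
      ∑ᶠ a ∈ {a : Fin n × Fin n → ℕ | (∀ p ∉ pairsLt n, a p = 0) ∧ ΔA n a = γ},
        (X : Polynomial ℤ) ^ Tot n a := by
  rw [Pq]
  refine (finsum_mem_eq_of_bijOn
    (fun a => fun α => ∑ p ∈ (pairsLt n).filter (fun p => rootA n p = α), a p)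
    ⟨?_, ?_, ?_⟩ ?_).symm
  · -- maps to
    rintro a ⟨ha0, ha1⟩
    constructor
    · intro α hα
      refine Finset.sum_eq_zero fun p hp => ?_
      rw [Finset.mem_filter] at hp
      exact absurd (mem_RA.mpr ⟨p, hp.1, hp.2⟩) hα
    · rw [← ha1, ΔA]
      have : ∀ α ∈ RA n,
          (∑ p ∈ (pairsLt n).filter (fun p => rootA n p = α), a p) • α
            = ∑ p ∈ (pairsLt n).filter (fun p => rootA n p = α), a p • rootA n p := by
        intro α hα
        rw [Finset.sum_smul]
        exact Finset.sum_congr rfl fun p hp => by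
          rw [(Finset.mem_filter.mp hp).2]
      rw [Finset.sum_congr rfl this,
        Finset.sum_fiberwise_of_maps_to (fun p hp => mem_RA.mpr ⟨p, hp, rfl⟩)]
      rfl
  · -- InjOn
    rintro a ⟨ha0, _⟩ a' ⟨ha'0, _⟩ h
    funext p
    by_cases hp : p ∈ pairsLt n
    · have := congrFun h (rootA n p)
      have hfib : (pairsLt n).filter (fun q => rootA n q = rootA n p) = {p} := by
        refine Finset.eq_singleton_iff_unique_mem.mpr ⟨Finset.mem_filter.mpr ⟨hp, rfl⟩, ?_⟩
        intro q hq
        rw [Finset.mem_filter] at hq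
        exact rootA_injOn hq.1 hp hq.2
      simp only [hfib, Finset.sum_singleton] at this
      exact this
    · rw [ha0 p hp, ha'0 p hp]
  · -- SurjOn
    rintro m ⟨hm0, hm1⟩
    refine ⟨fun p => if p ∈ pairsLt n then m (rootA n p) else 0, ⟨?_, ?_⟩, ?_⟩
    · intro p hp; simp [hp]
    · rw [← hm1, ΔA]
      rw [show (RA n) = (pairsLt n).image (rootA n) from rfl,
        Finset.sum_image (fun p hp q hq h => rootA_injOn hp hq h)]
      exact Finset.sum_congr rfl fun p hp => by simp [hp, rootA]
    · funext α
      by_cases hα : α ∈ RA n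
      · obtain ⟨p, hp, hpα⟩ := mem_RA.mp hα
        have hfib : (pairsLt n).filter (fun q => rootA n q = α) = {p} := by
          refine Finset.eq_singleton_iff_unique_mem.mpr ⟨Finset.mem_filter.mpr ⟨hp, hpα⟩, ?_⟩
          intro q hq
          rw [Finset.mem_filter] at hq
          exact rootA_injOn hq.1 hp (hq.2.trans hpα.symm)
        simp only [hfib, Finset.sum_singleton, if_pos hp, hpα]
      · rw [hm0 α hα]
        refine Finset.sum_eq_zero fun p hp => ?_
        rw [Finset.mem_filter] at hp
        exact absurd (mem_RA.mpr ⟨p, hp.1, hp.2⟩) hα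
  · -- weights
    rintro a ⟨ha0, _⟩
    congr 1
    rw [Tot]
    exact (Finset.sum_fiberwise_of_maps_to (fun p hp => mem_RA.mpr ⟨p, hp, rfl⟩) a).symm

/-- Pq over RA vanishes unless the coordinate sum is zero. -/
lemma Pq_RA_eq_zero {γ : Fin n → ℤ} (h : ∑ i, γ i ≠ 0) : Pq n (RA n) γ = 0 := by
  rw [Pq]
  have : {m : (Fin n → ℤ) → ℕ |
      (∀ α, α ∉ RA n → m α = 0) ∧ ∑ α ∈ RA n, m α • α = γ} = (∅ : Set _) := by
    refine Set.eq_empty_iff_forall_notMem.mpr fun m ⟨_, hm1⟩ => h ?_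
    have := congrArg (fun v => ∑ i, v i) hm1
    rw [← this]
    simp only [Finset.sum_apply, Pi.smul_apply]
    rw [Finset.sum_comm]
    refine Finset.sum_eq_zero fun α hα => ?_
    obtain ⟨p, _, rfl⟩ := mem_RA.mp hα
    rw [← Finset.smul_sum, sum_rootA, smul_zero]
  rw [this, finsum_mem_empty]

end UDec
noncomputable section
namespace UDec
variable {n : ℕ}

/-- generalized alternating sum -/
def KTv (n : ℕ) (R : Finset (Fin n → ℤ)) (v mu : Fin n → ℤ) : Polynomial ℤ :=
  ∑ σ : Equiv.Perm (Fin n),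
    (Equiv.Perm.sign σ : ℤ) • Pq n R (fun i => v (σ i) - (mu + rho n) i)

lemma KT_eq_KTv (R : Finset (Fin n → ℤ)) (lam mu : Fin n → ℤ) :
    KT n R lam mu = KTv n R (lam + rho n) mu := rfl

lemma KTv_comp (R : Finset (Fin n → ℤ)) (v mu : Fin n → ℤ) (w : Equiv.Perm (Fin n)) :
    KTv n R (fun i => v (w i)) mu = (Equiv.Perm.sign w : ℤ) • KTv n R v mu := by
  calc KTv n R (fun i => v (w i)) mu
      = ∑ σ : Equiv.Perm (Fin n), (Equiv.Perm.sign ((w⁻¹ * (w * σ))) : ℤ) •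
          Pq n R (fun i => v ((w * σ) i) - (mu + rho n) i) := by
        rw [KTv]
        refine Finset.sum_congr rfl fun σ _ => ?_
        rw [inv_mul_cancel_left]
        rfl
    _ = ∑ τ : Equiv.Perm (Fin n), (Equiv.Perm.sign ((w⁻¹ * τ)) : ℤ) •
          Pq n R (fun i => v (τ i) - (mu + rho n) i) :=
        Equiv.sum_comp (Equiv.mulLeft w)
          (fun τ => (Equiv.Perm.sign ((w⁻¹ * τ)) : ℤ) •
            Pq n R (fun i => v (τ i) - (mu + rho n) i))
    _ = (Equiv.Perm.sign w : ℤ) • KTv n R v mu := by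
        rw [KTv, Finset.smul_sum]
        refine Finset.sum_congr rfl fun τ _ => ?_
        rw [map_mul, map_inv, smul_smul]
        congr 1
        simp [Units.val_mul]

lemma KTv_eq_zero_of_rep (R : Finset (Fin n → ℤ)) (v mu : Fin n → ℤ) {a b : Fin n}
    (hab : a ≠ b) (h : v a = v b) : KTv n R v mu = 0 := by
  have hw : (fun i => v (Equiv.swap a b i)) = v := by
    funext i
    rcases eq_or_ne i a with rfl | hia
    · rw [Equiv.swap_apply_left]; exact h.symm
    rcases eq_or_ne i b with rfl | hib
    · rw [Equiv.swap_apply_right]; exact h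
    · rw [Equiv.swap_apply_of_ne_of_ne hia hib]
  have hk := KTv_comp R v mu (Equiv.swap a b)
  rw [hw, Equiv.Perm.sign_swap hab] at hk
  have h2 : KTv n R v mu + KTv n R v mu = 0 := by
    nth_rewrite 1 [hk]
    simp
  exact add_self_eq_zero.mp h2

lemma KTv_eq_zero_of_not_inj (R : Finset (Fin n → ℤ)) (v mu : Fin n → ℤ)
    (h : ¬ Function.Injective v) : KTv n R v mu = 0 := by
  rw [Function.not_injective_iff] at h
  obtain ⟨a, b, hv, hab⟩ := h
  exact KTv_eq_zero_of_rep R v mu hab hv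

/-- KT over RA vanishes when coordinate sums differ. -/
lemma KT_RA_eq_zero {nu mu : Fin n → ℤ} (h : ∑ i, nu i ≠ ∑ i, mu i) :
    KT n (RA n) nu mu = 0 := by
  rw [KT]
  refine Finset.sum_eq_zero fun σ _ => ?_
  rw [Pq_RA_eq_zero, smul_zero]
  have h1 : ∑ i, (nu + rho n) (σ i) = ∑ i, (nu + rho n) i :=
    Equiv.sum_comp σ (nu + rho n)
  rw [Finset.sum_sub_distrib, h1]
  simp only [Pi.add_apply, Finset.sum_add_distrib]
  omega

end UDec
end
noncomputable section
namespace UDec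
variable {n : ℕ}

lemma bounded_finite {α : Type*} [Fintype α] (M : ℕ) : {f : α → ℕ | ∀ x, f x ≤ M}.Finite := by
  apply Set.Finite.subset (Set.finite_range (fun g : α → Fin (M + 1) => fun x => (g x : ℕ)))
  intro f hf
  exact ⟨fun x => ⟨f x, Nat.lt_succ_of_le (hf x)⟩, rfl⟩

lemma boundedZ_finite (M : ℕ) : {v : Fin n → ℤ | ∀ i, 0 ≤ v i ∧ v i ≤ M}.Finite := by
  apply Set.Finite.subset
    (Set.finite_range (fun g : Fin n → Fin (M + 1) => fun x => ((g x : ℕ) : ℤ)))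
  intro v hv
  refine ⟨fun i => ⟨(v i).toNat, ?_⟩, funext fun i => ?_⟩
  · have := hv i; omega
  · have := hv i; simp; omega

lemma partial_eps (k : Fin n) (j : Fin n) :
    ∑ i ∈ Finset.univ.filter (· ≤ k), eps n j i = if j ≤ k then 1 else 0 := by
  simp only [eps_apply]
  rw [Finset.sum_ite_eq' (Finset.univ.filter (· ≤ k)) j (fun _ => (1 : ℤ))]
  simp

lemma a_bound {a : Fin n × Fin n → ℕ} {γ : Fin n → ℤ}
    (ha : ∀ p ∉ pairsLt n, a p = 0) (h : ΔA n a = γ) (p : Fin n × Fin n) :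
    (a p : ℤ) ≤ ∑ i, max (γ i) 0 := by
  have hmax : (0:ℤ) ≤ ∑ i, max (γ i) 0 :=
    Finset.sum_nonneg fun i _ => le_max_right _ _
  by_cases hp : p ∈ pairsLt n
  · have key : ∑ i ∈ Finset.univ.filter (· ≤ p.1), γ i
        = ∑ q ∈ pairsLt n,
            (a q : ℤ) * ((if q.1 ≤ p.1 then 1 else 0) - (if q.2 ≤ p.1 then 1 else 0)) := by
      rw [← h]
      simp only [ΔA_apply]
      rw [Finset.sum_comm]
      refine Finset.sum_congr rfl fun q _ => ?_
      rw [← Finset.mul_sum]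
      congr 1
      rw [Finset.sum_sub_distrib, partial_eps, partial_eps]
    have nonneg : ∀ q ∈ pairsLt n,
        (0:ℤ) ≤ (a q : ℤ) * ((if q.1 ≤ p.1 then 1 else 0) - (if q.2 ≤ p.1 then 1 else 0)) := by
      intro q hq
      have hlt := mem_pairsLt.mp hq
      refine mul_nonneg (by positivity) (sub_nonneg.mpr ?_)
      split_ifs with h1 h2 <;> norm_num
      exact absurd (le_trans hlt.le h1) h2
    have lower : (a p : ℤ) ≤ ∑ i ∈ Finset.univ.filter (· ≤ p.1), γ i := by
      rw [key]
      have hterm : (a p : ℤ)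
          = (a p : ℤ) * ((if p.1 ≤ p.1 then 1 else 0) - (if p.2 ≤ p.1 then 1 else 0)) := by
        rw [if_pos le_rfl, if_neg (not_le.mpr (mem_pairsLt.mp hp))]
        ring
      rw [hterm]
      exact Finset.single_le_sum nonneg hp
    have s1 : ∑ i ∈ Finset.univ.filter (· ≤ p.1), γ i
        ≤ ∑ i ∈ Finset.univ.filter (· ≤ p.1), max (γ i) 0 :=
      Finset.sum_le_sum fun i _ => le_max_left _ _
    have s2 : ∑ i ∈ Finset.univ.filter (· ≤ p.1), max (γ i) 0 ≤ ∑ i, max (γ i) 0 :=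
      Finset.sum_le_sum_of_subset_of_nonneg (Finset.filter_subset _ _)
        (fun i _ _ => le_max_right _ _)
    omega
  · rw [ha p hp]
    exact_mod_cast hmax

lemma finA (γ : Fin n → ℤ) :
    {a : Fin n × Fin n → ℕ | (∀ p ∉ pairsLt n, a p = 0) ∧ ΔA n a = γ}.Finite := by
  apply Set.Finite.subset (bounded_finite (∑ i, max (γ i) 0).toNat)
  rintro a ⟨ha0, ha1⟩ p
  have := a_bound ha0 ha1 p
  omega

lemma finB (T : ℤ) :
    {b : Fin n × Fin n → ℕ | (∀ p ∉ pairsLt n, b p = 0) ∧ 2 * (Tot n b : ℤ) = T}.Finite := by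
  apply Set.Finite.subset (bounded_finite T.toNat)
  rintro b ⟨hb0, hb1⟩ p
  by_cases hp : p ∈ pairsLt n
  · have : b p ≤ Tot n b := Finset.single_le_sum (fun q _ => Nat.zero_le _) hp
    omega
  · rw [hb0 p hp]; omega

lemma finE (δ : Fin n → ℤ) :
    {e : Fin n × Fin n → ℕ | (∀ p ∉ pairsLt n, e p = 0) ∧ Δ n e = δ}.Finite := by
  apply Set.Finite.subset (finB (∑ i, δ i))
  rintro e ⟨he0, he1⟩
  exact ⟨he0, by rw [← he1, sum_Δ]⟩

lemma finP (S : ℤ) :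
    {ν : Fin n → ℤ | Antitone ν ∧ (∀ i, 0 ≤ ν i) ∧ ∑ i, ν i = S}.Finite := by
  apply Set.Finite.subset (boundedZ_finite S.toNat)
  rintro ν ⟨-, h0, hs⟩ i
  have h1 : ν i ≤ ∑ j, ν j := Finset.single_le_sum (fun j _ => h0 j) (Finset.mem_univ i)
  have h2 : (0:ℤ) ≤ ∑ j, ν j := Finset.sum_nonneg fun j _ => h0 j
  exact ⟨h0 i, by omega⟩

lemma exists_sort {v : Fin n → ℤ} (hv : Function.Injective v) :
    ∃ σ : Equiv.Perm (Fin n), StrictAnti (fun i => v (σ i)) := by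
  refine ⟨(Fin.revPerm).trans (Tuple.sort v), ?_⟩
  have hsm : StrictMono (v ∘ Tuple.sort v) :=
    (Tuple.monotone_sort v).strictMono_of_injective (hv.comp (Equiv.injective _))
  intro i j hij
  have : Fin.rev j < Fin.rev i := by rwa [Fin.rev_lt_rev]
  exact hsm this

lemma strictAnti_eq_of_range_eq {f g : Fin n → ℤ} (hf : StrictAnti f) (hg : StrictAnti g)
    (h : Set.range f = Set.range g) : f = g :=
  (StrictAnti.range_inj hf hg).mp h

lemma strictAnti_add_rho {ν : Fin n → ℤ} (hν : Antitone ν) : StrictAnti (ν + rho n) := by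
  intro i j hij
  have h1 : ν j ≤ ν i := hν hij.le
  have h2 : rho n j < rho n i := by
    simp only [rho]
    have : (i : ℕ) < (j : ℕ) := hij
    omega
  simp only [Pi.add_apply]
  omega

end UDec
end
noncomputable section
namespace UDec
variable {n : ℕ}

def φ (σ : Equiv.Perm (Fin n)) (p : Fin n × Fin n) : Fin n × Fin n :=
  if σ p.1 < σ p.2 then (σ p.1, σ p.2) else (σ p.2, σ p.1)

lemma φ_mem {σ : Equiv.Perm (Fin n)} {p : Fin n × Fin n} (hp : p ∈ pairsLt n) :
    φ σ p ∈ pairsLt n := by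
  rw [mem_pairsLt] at hp ⊢
  have hne : σ p.1 ≠ σ p.2 := fun h => absurd (σ.injective h) (ne_of_lt hp)
  rw [φ]
  split_ifs with h
  · exact h
  · exact lt_of_le_of_ne (not_lt.mp h) (Ne.symm hne)

lemma φ_φ {σ : Equiv.Perm (Fin n)} {p : Fin n × Fin n} (hp : p ∈ pairsLt n) :
    φ σ⁻¹ (φ σ p) = p := by
  rw [mem_pairsLt] at hp
  have hne : σ p.1 ≠ σ p.2 := fun h => absurd (σ.injective h) (ne_of_lt hp)
  have h2 : ¬ p.2 < p.1 := not_lt.mpr hp.le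
  by_cases h : σ p.1 < σ p.2
  · simp [φ, h, hp, h2]
  · have h' : σ p.2 < σ p.1 := lt_of_le_of_ne (not_lt.mp h) (Ne.symm hne)
    simp [φ, h, h', hp, h2, not_lt.mpr h'.le]

lemma eps_perm (σ : Equiv.Perm (Fin n)) (j i : Fin n) :
    eps n j (σ i) = eps n (σ⁻¹ j) i := by
  rw [eps_apply, eps_apply]
  refine if_congr ?_ rfl rfl
  constructor
  · intro h; rw [← h]; simp
  · intro h; rw [h]; simp

lemma eps_pair_φ (σ : Equiv.Perm (Fin n)) (p : Fin n × Fin n) (i : Fin n) :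
    eps n (φ σ p).1 i + eps n (φ σ p).2 i = eps n (σ p.1) i + eps n (σ p.2) i := by
  rw [φ]
  split_ifs with h
  · rfl
  · exact add_comm _ _

def actB (σ : Equiv.Perm (Fin n)) (b : Fin n × Fin n → ℕ) : Fin n × Fin n → ℕ :=
  fun q => if q.1 < q.2 then b (φ σ q) else 0

lemma actB_applyLt (σ : Equiv.Perm (Fin n)) (b : Fin n × Fin n → ℕ) {q : Fin n × Fin n}
    (hq : q ∈ pairsLt n) : actB σ b q = b (φ σ q) := by
  rw [actB, if_pos (mem_pairsLt.mp hq)]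

lemma actB_supp (σ : Equiv.Perm (Fin n)) (b : Fin n × Fin n → ℕ) :
    ∀ p ∉ pairsLt n, actB σ b p = 0 := by
  intro p hp
  rw [mem_pairsLt] at hp
  rw [actB, if_neg hp]

lemma sum_φ {M : Type*} [AddCommMonoid M] (σ : Equiv.Perm (Fin n)) (F : Fin n × Fin n → M) :
    ∑ p ∈ pairsLt n, F (φ σ p) = ∑ p ∈ pairsLt n, F p := by
  refine Finset.sum_nbij' (φ σ) (φ σ⁻¹) (fun p hp => φ_mem hp) (fun q hq => φ_mem hq)
    (fun p hp => φ_φ hp) (fun q hq => ?_) (fun p _ => rfl)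
  have := φ_φ (σ := σ⁻¹) hq
  rwa [inv_inv] at this

lemma Tot_actB (σ : Equiv.Perm (Fin n)) (b : Fin n × Fin n → ℕ) :
    Tot n (actB σ b) = Tot n b := by
  rw [Tot, Tot, ← sum_φ σ b]
  exact Finset.sum_congr rfl fun q hq => actB_applyLt σ b hq

lemma Δ_actB (σ : Equiv.Perm (Fin n)) (b : Fin n × Fin n → ℕ) :
    Δ n (actB σ b) = fun i => Δ n b (σ i) := by
  funext i
  rw [Δ_apply]
  have hR : Δ n b (σ i) = ∑ p ∈ pairsLt n, (b p : ℤ) * (eps n p.1 (σ i) + eps n p.2 (σ i)) :=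
    Δ_apply b (σ i)
  rw [hR]
  symm
  refine Finset.sum_nbij' (φ σ⁻¹) (φ σ) (fun p hp => φ_mem hp) (fun q hq => φ_mem hq)
    (fun p hp => ?_) (fun q hq => φ_φ hq) (fun p hp => ?_)
  · have := φ_φ (σ := σ⁻¹) hp
    rwa [inv_inv] at this
  · -- (b p) * (eps p.1 (σ i) + eps p.2 (σ i))
    --   = actB σ b (φ σ⁻¹ p) * (eps (φ σ⁻¹ p).1 i + eps (φ σ⁻¹ p).2 i)
    have h1 : actB σ b (φ σ⁻¹ p) = b p := by
      rw [actB_applyLt σ b (φ_mem hp)]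
      have := φ_φ (σ := σ⁻¹) hp
      rw [inv_inv] at this
      rw [this]
    rw [h1, eps_pair_φ σ⁻¹ p i, eps_perm, eps_perm]

lemma actB_actB (σ : Equiv.Perm (Fin n)) (b : Fin n × Fin n → ℕ)
    (hb : ∀ p ∉ pairsLt n, b p = 0) : actB σ⁻¹ (actB σ b) = b := by
  funext q
  by_cases hq : q ∈ pairsLt n
  · rw [actB_applyLt _ _ hq, actB_applyLt _ _ (φ_mem hq)]
    have := φ_φ (σ := σ⁻¹) hq
    rw [inv_inv] at this
    rw [this]
  · rw [actB_supp _ _ q hq, hb q hq]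

end UDec
end
noncomputable section
namespace UDec
variable {n : ℕ}

lemma le_Tot {b : Fin n × Fin n → ℕ} (hb : ∀ p ∉ pairsLt n, b p = 0) (p : Fin n × Fin n) :
    b p ≤ Tot n b := by
  by_cases hp : p ∈ pairsLt n
  · exact Finset.single_le_sum (fun q _ => Nat.zero_le _) hp
  · rw [hb p hp]; exact Nat.zero_le _

lemma fq_eq (β : Fin n → ℤ) :
    fq n β = ∑ b ∈ (finB (n := n) (- ∑ i, β i)).toFinset,
      (X : Polynomial ℤ) ^ Tot n b * Pq n (RA n) (β + Δ n b) := by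
  -- identify the index set of fq
  have hfq : fq n β = ∑ᶠ ab ∈ {ab : ((Fin n × Fin n) → ℕ) × ((Fin n × Fin n) → ℕ) |
      (∀ p ∉ pairsLt n, ab.1 p = 0) ∧ (∀ p ∉ pairsLt n, ab.2 p = 0) ∧
      ΔA n ab.1 - Δ n ab.2 = β},
      (X : Polynomial ℤ) ^ (Tot n ab.1 + Tot n ab.2) := rfl
  set S := {ab : ((Fin n × Fin n) → ℕ) × ((Fin n × Fin n) → ℕ) |
      (∀ p ∉ pairsLt n, ab.1 p = 0) ∧ (∀ p ∉ pairsLt n, ab.2 p = 0) ∧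
      ΔA n ab.1 - Δ n ab.2 = β} with hSdef
  -- membership facts
  have hmemB : ∀ ab ∈ S, ab.2 ∈ {b : Fin n × Fin n → ℕ |
      (∀ p ∉ pairsLt n, b p = 0) ∧ 2 * (Tot n b : ℤ) = - ∑ i, β i} := by
    rintro ab ⟨h1, h2, h3⟩
    refine ⟨h2, ?_⟩
    have := congrArg (fun v : Fin n → ℤ => ∑ i, v i) h3
    simp only [Finset.sum_apply, Pi.sub_apply] at this
    rw [Finset.sum_sub_distrib] at this
    rw [sum_ΔA, sum_Δ] at this
    omega
  have hmemA : ∀ ab ∈ S, ab.1 ∈ {a : Fin n × Fin n → ℕ |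
      (∀ p ∉ pairsLt n, a p = 0) ∧ ΔA n ab.1 = β + Δ n ab.2} := by
    rintro ab ⟨h1, h2, h3⟩
    exact ⟨h1, by rw [← h3]; abel⟩
  -- finiteness of S
  have hS : S.Finite := by
    set M1 : ℕ := (∑ i, |β i| - ∑ i, β i).toNat with hM1
    set M2 : ℕ := (- ∑ i, β i).toNat with hM2
    apply Set.Finite.subset (Set.Finite.prod (bounded_finite (α := Fin n × Fin n) M1)
      (bounded_finite (α := Fin n × Fin n) M2))
    rintro ab hab
    obtain ⟨h1, h2, h3⟩ := hab
    obtain ⟨-, hTb⟩ := hmemB ab ⟨h1, h2, h3⟩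
    constructor
    · -- ab.1 bounded
      intro p
      have hA := a_bound h1 (by rw [← h3]; abel : ΔA n ab.1 = β + Δ n ab.2) p
      have hle : ∑ i, max ((β + Δ n ab.2) i) 0 ≤ ∑ i, |β i| + 2 * (Tot n ab.2 : ℤ) := by
        rw [← sum_Δ]
        rw [← Finset.sum_add_distrib]
        refine Finset.sum_le_sum fun i _ => ?_
        have := Δ_nonneg ab.2 i
        have := abs_nonneg (β i)
        have := le_abs_self (β i)
        simp only [Pi.add_apply]
        omega
      rw [hTb] at hle
      omega
    · -- ab.2 bounded
      intro p
      have := le_Tot h2 p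
      omega
  -- convert fq to a finite sum
  rw [hfq, finsum_mem_eq_finite_toFinset_sum _ hS]
  -- convert the RHS inner Pq to finite sums
  have hPq : ∀ b ∈ (finB (n := n) (- ∑ i, β i)).toFinset,
      (X : Polynomial ℤ) ^ Tot n b * Pq n (RA n) (β + Δ n b)
        = ∑ a ∈ (finA (n := n) (β + Δ n b)).toFinset,
            (X : Polynomial ℤ) ^ (Tot n b + Tot n a) := by
    intro b _
    rw [Pq_RA, finsum_mem_eq_finite_toFinset_sum _ (finA (β + Δ n b)), Finset.mul_sum]
    exact Finset.sum_congr rfl fun a _ => by rw [← pow_add]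
  rw [Finset.sum_congr rfl hPq]
  rw [Finset.sum_sigma']
  -- now a bijection
  refine Finset.sum_nbij' (fun ab => ⟨ab.2, ab.1⟩) (fun x => (x.2, x.1)) ?_ ?_ ?_ ?_ ?_
  · intro ab hab
    rw [Set.Finite.mem_toFinset] at hab
    rw [Finset.mem_sigma, Set.Finite.mem_toFinset, Set.Finite.mem_toFinset]
    exact ⟨hmemB ab hab, hmemA ab hab⟩
  · rintro ⟨b, a⟩ hx
    rw [Finset.mem_sigma, Set.Finite.mem_toFinset, Set.Finite.mem_toFinset] at hx
    obtain ⟨⟨hb0, hbT⟩, ha0, haΔ⟩ := hx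
    rw [Set.Finite.mem_toFinset]
    exact ⟨ha0, hb0, by rw [haΔ]; abel⟩
  · intro ab _; rfl
  · rintro ⟨b, a⟩ _; rfl
  · intro ab _
    rw [add_comm]
end UDec
end
noncomputable section
namespace UDec
variable {n : ℕ}

lemma uP_eq (lam mu : Fin n → ℤ) :
    uP n lam mu = ∑ b ∈ (finB (n := n) (∑ i, mu i - ∑ i, lam i)).toFinset,
      (X : Polynomial ℤ) ^ Tot n b * KT n (RA n) (lam + Δ n b) mu := by
  have hsum : ∀ σ : Equiv.Perm (Fin n),
      (- ∑ i, ((lam + rho n) (σ i) - (mu + rho n) i)) = ∑ i, mu i - ∑ i, lam i := by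
    intro σ
    rw [Finset.sum_sub_distrib, Equiv.sum_comp σ (lam + rho n)]
    simp only [Pi.add_apply, Finset.sum_add_distrib]
    ring
  rw [uP]
  have step1 : ∀ σ : Equiv.Perm (Fin n),
      fq n (fun i => (lam + rho n) (σ i) - (mu + rho n) i)
        = ∑ b ∈ (finB (n := n) (∑ i, mu i - ∑ i, lam i)).toFinset,
            (X : Polynomial ℤ) ^ Tot n b *
              Pq n (RA n) ((lam + Δ n b + rho n) ∘ σ - (mu + rho n)) := by
    intro σ
    rw [fq_eq, hsum σ]
    refine Finset.sum_nbij' (actB σ⁻¹) (actB σ) ?_ ?_ ?_ ?_ ?_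
    · intro b hb
      rw [Set.Finite.mem_toFinset] at hb ⊢
      exact ⟨actB_supp _ _, by rw [Tot_actB]; exact hb.2⟩
    · intro b hb
      rw [Set.Finite.mem_toFinset] at hb ⊢
      exact ⟨actB_supp _ _, by rw [Tot_actB]; exact hb.2⟩
    · intro b hb
      rw [Set.Finite.mem_toFinset] at hb
      have := actB_actB σ⁻¹ b hb.1
      rwa [inv_inv] at this
    · intro b hb
      rw [Set.Finite.mem_toFinset] at hb
      exact actB_actB σ b hb.1
    · intro b hb
      rw [Set.Finite.mem_toFinset] at hb
      rw [Tot_actB]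
      congr 1
      congr 1
      funext i
      rw [Δ_actB]
      simp only [Function.comp_apply, Pi.sub_apply, Pi.add_apply,
        Equiv.Perm.inv_def, Equiv.symm_apply_apply]
      ring
  rw [Finset.sum_congr rfl fun σ _ => by rw [step1 σ]]
  simp only [Finset.smul_sum]
  rw [Finset.sum_comm]
  refine Finset.sum_congr rfl fun b _ => ?_
  rw [KT, Finset.mul_sum]
  refine Finset.sum_congr rfl fun σ _ => ?_
  rw [mul_smul_comm]
  rfl
end UDec
end
noncomputable section
namespace UDec
variable {n : ℕ}

lemma strictAnti_gap_aux {f : Fin n → ℤ} (hf : StrictAnti f) :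
    ∀ d : ℕ, ∀ i j : Fin n, (j : ℕ) = (i : ℕ) + d →
      f j + ((j : ℕ) : ℤ) ≤ f i + ((i : ℕ) : ℤ)
  | 0, i, j, h => by
    have : j = i := Fin.ext (by omega)
    subst this; omega
  | (d+1), i, j, h => by
    have hk : (i : ℕ) + 1 < n := by have := j.isLt; omega
    have h1 := strictAnti_gap_aux hf d ⟨(i : ℕ) + 1, hk⟩ j (by simp; omega)
    have h2 : f ⟨(i : ℕ) + 1, hk⟩ < f i := hf (by rw [Fin.lt_def]; simp)
    have h3 : (((⟨(i : ℕ) + 1, hk⟩ : Fin n) : ℕ) : ℤ) = ((i : ℕ) : ℤ) + 1 := by simp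
    omega

lemma strictAnti_gap {f : Fin n → ℤ} (hf : StrictAnti f) {i j : Fin n} (hij : i ≤ j) :
    f j + ((j : ℕ) : ℤ) ≤ f i + ((i : ℕ) : ℤ) := by
  have hij' : (i : ℕ) ≤ (j : ℕ) := hij
  exact strictAnti_gap_aux hf ((j : ℕ) - (i : ℕ)) i j (by omega)

lemma sumdelta {lam ν : Fin n → ℤ} {σ : Equiv.Perm (Fin n)} {e : Fin n × Fin n → ℕ}
    (heΔ : Δ n e = fun i => (ν + rho n) (σ i) - (lam + rho n) i) :
    2 * (Tot n e : ℤ) = ∑ i, ν i - ∑ i, lam i := by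
  rw [← sum_Δ, heΔ]
  rw [Finset.sum_sub_distrib, Equiv.sum_comp σ (ν + rho n)]
  simp only [Pi.add_apply, Finset.sum_add_distrib]
  ring

end UDec
end

open UDec in
theorem u_decomposition' (n : ℕ) (hn : 1 ≤ n) (lam mu : Fin n → ℤ)
    (hlam : Antitone lam) (hlam0 : ∀ i, 0 ≤ lam i)
    (hmu : Antitone mu) (hmu0 : ∀ i, 0 ≤ mu i)
    (hsum : ∑ i, lam i ≤ ∑ i, mu i)
    (hpar : (∑ i, lam i) % 2 = (∑ i, mu i) % 2) :
    uP n lam mu =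
      (X : Polynomial ℤ) ^ (((∑ i, mu i) - ∑ i, lam i) / 2).toNat *
        ∑ᶠ ν ∈ {ν : Fin n → ℤ | Antitone ν ∧ (∀ i, 0 ≤ ν i) ∧ ∑ i, ν i = ∑ i, mu i},
          (∑ σ : Equiv.Perm (Fin n), (Equiv.Perm.sign σ : ℤ) *
              (dD n (fun i => (ν + rho n) (σ i) - (lam + rho n) i) : ℤ)) •
            KT n (RA n) ν mu := by
  classical
  have h2c : 2 * (((((∑ i, mu i) - ∑ i, lam i) / 2).toNat : ℕ) : ℤ)
      = ∑ i, mu i - ∑ i, lam i := by omega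
  rw [uP_eq lam mu]
  rw [finsum_mem_eq_finite_toFinset_sum _ (finP (n := n) (∑ i, mu i))]
  rw [Finset.mul_sum]
  symm
  -- Step 1: expand each summand into a double sum over σ and e
  have key : ∀ ν ∈ (finP (n := n) (∑ i, mu i)).toFinset,
      (X : Polynomial ℤ) ^ (((∑ i, mu i) - ∑ i, lam i) / 2).toNat *
        ((∑ σ : Equiv.Perm (Fin n), (Equiv.Perm.sign σ : ℤ) *
            (dD n (fun i => (ν + rho n) (σ i) - (lam + rho n) i) : ℤ)) • KT n (RA n) ν mu)
      = ∑ σ : Equiv.Perm (Fin n),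
          ∑ e ∈ (finE (n := n) (fun i => (ν + rho n) (σ i) - (lam + rho n) i)).toFinset,
            (X : Polynomial ℤ) ^ Tot n e * KT n (RA n) (lam + Δ n e) mu := by
    intro ν hν
    rw [Set.Finite.mem_toFinset] at hν
    obtain ⟨hν1, hν2, hν3⟩ := hν
    rw [Finset.sum_smul, Finset.mul_sum]
    refine Finset.sum_congr rfl fun σ _ => ?_
    have hd : (dD n (fun i => (ν + rho n) (σ i) - (lam + rho n) i) : ℤ)
        = (((finE (n := n) (fun i => (ν + rho n) (σ i) - (lam + rho n) i)).toFinset.card : ℕ) : ℤ) := by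
      congr 1
      rw [dD]
      exact Set.ncard_eq_toFinset_card _ (finE _)
    rw [hd]
    have hconst : ((Equiv.Perm.sign σ : ℤ) *
          (((finE (n := n) (fun i => (ν + rho n) (σ i) - (lam + rho n) i)).toFinset.card : ℕ) : ℤ)) •
            KT n (RA n) ν mu
        = ∑ _e ∈ (finE (n := n) (fun i => (ν + rho n) (σ i) - (lam + rho n) i)).toFinset,
            (Equiv.Perm.sign σ : ℤ) • KT n (RA n) ν mu := by
      rw [Finset.sum_const, mul_comm, mul_smul, natCast_zsmul]
    rw [hconst, Finset.mul_sum]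
    refine Finset.sum_congr rfl fun e he => ?_
    rw [Set.Finite.mem_toFinset] at he
    obtain ⟨he0, heΔ⟩ := he
    have hK : KT n (RA n) (lam + Δ n e) mu = (Equiv.Perm.sign σ : ℤ) • KT n (RA n) ν mu := by
      rw [KT_eq_KTv]
      have harg : lam + Δ n e + rho n = fun i => (ν + rho n) (σ i) := by
        funext i
        have h := congrFun heΔ i
        simp only [Pi.add_apply] at h ⊢
        omega
      rw [harg, KTv_comp (RA n) (ν + rho n) mu σ, KT_eq_KTv]
    have hTot : Tot n e = ((∑ i, mu i) - ∑ i, lam i).toNat / 2 + 0 := by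
      have := sumdelta heΔ
      omega
    have hTot' : Tot n e = (((∑ i, mu i) - ∑ i, lam i) / 2).toNat := by
      have := sumdelta heΔ
      omega
    rw [hK, hTot']
  rw [Finset.sum_congr rfl key]
  -- Step 2: flatten the triple sum into a sigma type
  have flat1 : ∀ ν ∈ (finP (n := n) (∑ i, mu i)).toFinset,
      (∑ σ : Equiv.Perm (Fin n),
        ∑ e ∈ (finE (n := n) (fun i => (ν + rho n) (σ i) - (lam + rho n) i)).toFinset,
          (X : Polynomial ℤ) ^ Tot n e * KT n (RA n) (lam + Δ n e) mu)
      = ∑ y ∈ (Finset.univ.sigma fun σ : Equiv.Perm (Fin n) =>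
            (finE (n := n) (fun i => (ν + rho n) (σ i) - (lam + rho n) i)).toFinset),
          (X : Polynomial ℤ) ^ Tot n y.2 * KT n (RA n) (lam + Δ n y.2) mu :=
    fun ν _ => Finset.sum_sigma' _ _ _
  rw [Finset.sum_congr rfl flat1, Finset.sum_sigma']
  -- Step 3: the bijection with supported b's of the right size
  refine Finset.sum_bij_ne_zero (fun x _ _ => x.2.2) ?_ ?_ ?_ ?_
  · -- maps into
    rintro ⟨ν, σ, e⟩ hx hne
    simp only [Finset.mem_sigma, Finset.mem_univ, Set.Finite.mem_toFinset,
      Set.mem_setOf_eq, true_and, and_true] at hx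
    obtain ⟨⟨hν1, hν2, hν3⟩, he0, heΔ⟩ := hx
    rw [Set.Finite.mem_toFinset]
    have hgoal : 2 * (Tot n e : ℤ) = ∑ i, mu i - ∑ i, lam i := by
      have := sumdelta heΔ
      omega
    exact ⟨he0, hgoal⟩
  · -- injective on nonzero terms
    rintro ⟨ν, σ, e⟩ hx hxne ⟨ν', σ', e'⟩ hy hyne hee
    simp only at hee
    subst hee
    simp only [Finset.mem_sigma, Finset.mem_univ, Set.Finite.mem_toFinset,
      Set.mem_setOf_eq, true_and, and_true] at hx hy
    obtain ⟨⟨hν1, hν2, hν3⟩, he0, heΔ⟩ := hx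
    obtain ⟨⟨hν'1, hν'2, hν'3⟩, he'0, he'Δ⟩ := hy
    -- the key vector
    have hKne : KT n (RA n) (lam + Δ n e) mu ≠ 0 := by
      intro h0
      exact hxne (by rw [h0, mul_zero])
    have hinj : Function.Injective (lam + Δ n e + rho n) := by
      by_contra hni
      exact hKne (by rw [KT_eq_KTv]; exact KTv_eq_zero_of_not_inj _ _ _ hni)
    have harg : lam + Δ n e + rho n = (ν + rho n) ∘ σ := by
      funext i
      have h := congrFun heΔ i
      simp only [Pi.add_apply, Function.comp_apply] at h ⊢
      omega
    have harg' : lam + Δ n e + rho n = (ν' + rho n) ∘ σ' := by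
      funext i
      have h := congrFun he'Δ i
      simp only [Pi.add_apply, Function.comp_apply] at h ⊢
      omega
    have hr : Set.range (ν + rho n) = Set.range (ν' + rho n) := by
      rw [← σ.surjective.range_comp (ν + rho n), ← σ'.surjective.range_comp (ν' + rho n),
        ← harg, ← harg']
    have hnu : ν + rho n = ν' + rho n :=
      strictAnti_eq_of_range_eq (strictAnti_add_rho hν1) (strictAnti_add_rho hν'1) hr
    have hνν' : ν = ν' := by
      funext i
      have := congrFun hnu i
      simp only [Pi.add_apply] at this
      omega
    subst hνν'
    have hσ : σ = σ' := by
      have hinj2 : Function.Injective (ν + rho n) := (strictAnti_add_rho hν1).injective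
      ext i
      have h1 := congrFun harg i
      have h2 := congrFun harg' i
      rw [h1] at h2
      have := hinj2 h2
      exact congrArg Fin.val this
    subst hσ
    rfl
  · -- surjective onto nonzero terms
    intro b hb hbne
    rw [Set.Finite.mem_toFinset] at hb
    obtain ⟨hb0, hbT⟩ := hb
    have hKne : KT n (RA n) (lam + Δ n b) mu ≠ 0 := by
      intro h0
      exact hbne (by rw [h0, mul_zero])
    have hinj : Function.Injective (lam + Δ n b + rho n) := by
      by_contra hni
      exact hKne (by rw [KT_eq_KTv]; exact KTv_eq_zero_of_not_inj _ _ _ hni)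
    obtain ⟨σ₀, hσ₀⟩ := exists_sort hinj
    set v : Fin n → ℤ := lam + Δ n b + rho n with hv
    set ν : Fin n → ℤ := fun i => v (σ₀ i) - rho n i with hνdef
    have hv1 : ∀ k, 1 ≤ v k := by
      intro k
      have h1 := hlam0 k
      have h2 := Δ_nonneg b k
      have h3 : 1 ≤ rho n k := by
        rw [rho]
        have := k.isLt
        omega
      simp only [hv, Pi.add_apply]
      omega
    have hanti : Antitone ν := by
      intro i j hij
      have := strictAnti_gap hσ₀ hij
      simp only [hνdef, rho]
      have hi := i.isLt
      have hj := j.isLt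
      omega
    have hnonneg : ∀ i, 0 ≤ ν i := by
      intro i
      have hlast : (⟨n - 1, by omega⟩ : Fin n) = ⟨n - 1, by omega⟩ := rfl
      have hle : i ≤ (⟨n - 1, by omega⟩ : Fin n) := by
        rw [Fin.le_def]
        have := i.isLt
        simp
        omega
      have hgap := strictAnti_gap hσ₀ hle
      have hvl := hv1 (σ₀ ⟨n - 1, by omega⟩)
      simp only [hνdef, rho]
      have hi := i.isLt
      simp at hgap
      omega
    have hsν : ∑ i, ν i = ∑ i, mu i := by
      have h1 : ∑ i, ν i = ∑ i, v i - ∑ i, rho n i := by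
        simp only [hνdef]
        rw [Finset.sum_sub_distrib, Equiv.sum_comp σ₀ v]
      have h2 : ∑ i, v i = ∑ i, lam i + (2 * (Tot n b : ℤ)) + ∑ i, rho n i := by
        simp only [hv, Pi.add_apply, Finset.sum_add_distrib]
        rw [sum_Δ]
      omega
    have hΔb : Δ n b = fun i => (ν + rho n) (σ₀⁻¹ i) - (lam + rho n) i := by
      funext i
      have h1 : (ν + rho n) (σ₀⁻¹ i) = v i := by
        simp only [hνdef, Pi.add_apply]
        rw [sub_add_cancel]
        congr 1
        exact σ₀.apply_symm_apply i
      rw [h1]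
      simp only [hv, Pi.add_apply]
      ring
    refine ⟨⟨ν, σ₀⁻¹, b⟩, ?_, ?_, rfl⟩
    · simp only [Finset.mem_sigma, Finset.mem_univ, Set.Finite.mem_toFinset,
        Set.mem_setOf_eq, true_and, and_true]
      exact ⟨⟨hanti, hnonneg, hsν⟩, hb0, hΔb⟩
    · exact hbne
  · -- values agree
    rintro ⟨ν, σ, e⟩ hx hne
    rfl

/-- for partitions `λ, μ` of length `n` with `|λ| ≤ |μ|` and `|λ| ≡ |μ| (mod 2)`,
`u_{λ,μ}(q) = q^{(|μ|-|λ|)/2} Σ_ν (Σ_{σ ∈ S_n} sgn(σ) d(σ(ν+ρ_n) - (λ+ρ_n))) K^{A_{n-1}}_{ν,μ}(q)`,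
where `ν` runs over the partitions of length `n` with `|ν| = |μ|`. -/
theorem u_decomposition (n : ℕ) (hn : 1 ≤ n) (lam mu : Fin n → ℤ)
    (hlam : Antitone lam) (hlam0 : ∀ i, 0 ≤ lam i)
    (hmu : Antitone mu) (hmu0 : ∀ i, 0 ≤ mu i)
    (hsum : ∑ i, lam i ≤ ∑ i, mu i)
    (hpar : (∑ i, lam i) % 2 = (∑ i, mu i) % 2) :
    uP n lam mu =
      (X : Polynomial ℤ) ^ (((∑ i, mu i) - ∑ i, lam i) / 2).toNat *
        ∑ᶠ ν ∈ {ν : Fin n → ℤ | Antitone ν ∧ (∀ i, 0 ≤ ν i) ∧ ∑ i, ν i = ∑ i, mu i},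
          (∑ σ : Equiv.Perm (Fin n), (Equiv.Perm.sign σ : ℤ) *
              (dD n (fun i => (ν + rho n) (σ i) - (lam + rho n) i) : ℤ)) •
            KT n (RA n) ν mu := by
  exact u_decomposition' n hn lam mu hlam hlam0 hmu hmu0 hsum hpar
end

section
/- Let λ, μ be partitions of length n, set m = max(λ_1, μ_1), λ̂ = (m−λ_n, m−λ_{n−1}, …, m−λ_1) and μ̂ = (m−μ_n, …, m−μ_1) (these are partitions of length n). Then u_{λ,μ}(q) = K̃^{D_n}_{λ̂,μ̂}(q). -/
/-!
Let `w₀ = Fin.rev` be the reversal `i ↦ n + 1 - i`. The substitution `x_i ↦ x_{w₀ i}⁻¹` maps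
`∏_{i<j} (1 - q x_i/x_j)⁻¹ ∏_{r<s} (1 - q x_r⁻¹ x_s⁻¹)⁻¹` to `∏_{α ∈ R_D⁺} (1 - q x^α)⁻¹`, so
`f_q(β) = P_q^D(-w₀ β)`. Since `-w₀(λ + ρ_n) = (λ̂ + ρ_n) - (m + n + 1)`, and conjugation by `w₀`
preserves signs, the alternating sums defining `u_{λ,μ}` and `K̃^{D_n}_{λ̂,μ̂}` agree term by term.
-/

open Finset Polynomial

section

variable {n : ℕ}

lemma eps_apply (i j : Fin n) : eps n i j = if j = i then 1 else 0 :=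
  Pi.single_apply i 1 j

lemma eps_rev_apply_rev (k j : Fin n) : eps n k.rev j.rev = eps n k j := by
  simp only [eps_apply, Fin.rev_inj]

lemma mem_pairsLt {p : Fin n × Fin n} : p ∈ pairsLt n ↔ p.1 < p.2 := by
  simp [pairsLt]

def rootD (n : ℕ) : (Fin n × Fin n) ⊕ (Fin n × Fin n) → Fin n → ℤ :=
  Sum.elim (fun p => eps n p.1 - eps n p.2) (fun p => eps n p.1 + eps n p.2)

lemma RD_eq_image : RD n = ((pairsLt n).disjSum (pairsLt n)).image (rootD n) := by
  ext α
  simp [RD, RA, rootD, Finset.mem_disjSum]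

lemma injOn_rootD : Set.InjOn (rootD n) ((pairsLt n).disjSum (pairsLt n)) := by
  rintro (⟨i, j⟩ | ⟨i, j⟩) hp (⟨k, l⟩ | ⟨k, l⟩) hq h <;>
    simp only [Finset.mem_coe, Finset.inl_mem_disjSum, Finset.inr_mem_disjSum, mem_pairsLt,
      Fin.lt_def] at hp hq <;>
    simp only [rootD, Sum.elim_inl, Sum.elim_inr, funext_iff, Pi.add_apply, Pi.sub_apply,
      eps_apply] at h
  · have hi := h i
    have hj := h j
    simp only [Sum.inl.injEq, Prod.ext_iff, Fin.ext_iff]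
    split_ifs at hi hj <;> omega
  · have hj := h j
    split_ifs at hj <;> omega
  · have hl := h l
    split_ifs at hl <;> omega
  · have hi := h i
    have hj := h j
    simp only [Sum.inr.injEq, Prod.ext_iff, Fin.ext_iff]
    split_ifs at hi hj <;> omega

theorem Pq_image {ι : Type*} [DecidableEq ι] (s : Finset ι) {g : ι → Fin n → ℤ}
    (hg : Set.InjOn g s) (β : Fin n → ℤ) :
    Pq n (s.image g) β =
      ∑ᶠ c ∈ {c : ι → ℕ | (∀ i, i ∉ s → c i = 0) ∧ ∑ i ∈ s, c i • g i = β},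
        (X : ℤ[X]) ^ ∑ i ∈ s, c i := by
  refine finsum_mem_eq_of_bijOn (fun m i => if i ∈ s then m (g i) else 0)
    ⟨?_, ?_, ?_⟩ fun m _ => ?_
  · rintro m ⟨-, hm⟩
    refine ⟨fun i hi => if_neg hi, ?_⟩
    rw [← hm, Finset.sum_image hg]
    exact Finset.sum_congr rfl fun i hi => by simp only [if_pos hi]
  · rintro m ⟨hm, -⟩ m' ⟨hm', -⟩ h
    funext α
    by_cases hα : α ∈ s.image g
    · obtain ⟨i, hi, rfl⟩ := Finset.mem_image.mp hα
      simpa [hi] using congrFun h i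
    · rw [hm α hα, hm' α hα]
  · rintro c ⟨hc, hcβ⟩
    set m : (Fin n → ℤ) → ℕ := fun α => ∑ i ∈ s, if g i = α then c i else 0
    have hm_apply : ∀ i ∈ s, m (g i) = c i := fun i hi => by
      simp only [m]
      rw [Finset.sum_eq_single_of_mem i hi fun j hj hji => if_neg fun h => hji (hg hj hi h),
        if_pos rfl]
    have hm_zero : ∀ α ∉ s.image g, m α = 0 := fun α hα =>
      Finset.sum_eq_zero fun i hi =>
        if_neg fun h : g i = α => hα (h ▸ Finset.mem_image_of_mem g hi)
    refine ⟨m, ⟨hm_zero, ?_⟩, ?_⟩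
    · rw [← hcβ, Finset.sum_image hg]
      exact Finset.sum_congr rfl fun i hi => by rw [hm_apply i hi]
    · funext i
      by_cases hi : i ∈ s
      · simp only [if_pos hi, hm_apply i hi]
      · simp only [if_neg hi, hc i hi]
  · rw [Finset.sum_image hg]
    exact congrArg _ (Finset.sum_congr rfl fun i hi => by simp only [if_pos hi])

/-- The relabelling of positive roots induced by `-w₀`, where `w₀ = Fin.rev`. -/
def swapRev (n : ℕ) : Equiv.Perm (Fin n × Fin n) :=
  Function.Involutive.toPerm (fun p => (p.2.rev, p.1.rev)) fun p => by simp

lemma swapRev_apply (p : Fin n × Fin n) : swapRev n p = (p.2.rev, p.1.rev) := rfl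

lemma swapRev_mem_pairsLt {p : Fin n × Fin n} : swapRev n p ∈ pairsLt n ↔ p ∈ pairsLt n := by
  simp [swapRev_apply, mem_pairsLt]

lemma sum_comp_swapRev {M : Type*} [AddCommMonoid M] (f : Fin n × Fin n → M) :
    ∑ p ∈ pairsLt n, f (swapRev n p) = ∑ p ∈ pairsLt n, f p :=
  Finset.sum_equiv (swapRev n) (fun _ => swapRev_mem_pairsLt.symm) fun _ _ => rfl

lemma sum_comp_swapRev_smul_sub (a : Fin n × Fin n → ℕ) :
    ∑ p ∈ pairsLt n, a (swapRev n p) • (eps n p.1 - eps n p.2) =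
      fun i => -(∑ p ∈ pairsLt n, a p • (eps n p.1 - eps n p.2)) i.rev := by
  rw [← sum_comp_swapRev fun p => a p • (eps n p.1 - eps n p.2)]
  funext i
  simp only [swapRev_apply, Finset.sum_apply, Pi.smul_apply, Pi.sub_apply, eps_rev_apply_rev,
    ← Finset.sum_neg_distrib]
  exact Finset.sum_congr rfl fun _ _ => by rw [← smul_neg, neg_sub]

lemma sum_comp_swapRev_smul_add (b : Fin n × Fin n → ℕ) :
    ∑ p ∈ pairsLt n, b (swapRev n p) • (eps n p.1 + eps n p.2) =
      fun i => (∑ p ∈ pairsLt n, b p • (eps n p.1 + eps n p.2)) i.rev := by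
  rw [← sum_comp_swapRev fun p => b p • (eps n p.1 + eps n p.2)]
  funext i
  simp only [swapRev_apply, Finset.sum_apply, Pi.smul_apply, Pi.add_apply, eps_rev_apply_rev,
    add_comm]

theorem fq_eq_Pq_RD (β : Fin n → ℤ) : fq n β = Pq n (RD n) fun i => -β i.rev := by
  rw [RD_eq_image, Pq_image _ injOn_rootD, fq]
  let e : (Fin n × Fin n → ℕ) × (Fin n × Fin n → ℕ) ≃ ((Fin n × Fin n) ⊕ (Fin n × Fin n) → ℕ) :=
    (((swapRev n).arrowCongr (Equiv.refl ℕ)).prodCongr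
      ((swapRev n).arrowCongr (Equiv.refl ℕ))).trans (Equiv.sumArrowEquivProdArrow _ _ _).symm
  have he : ∀ ab, e ab = Sum.elim (ab.1 ∘ swapRev n) (ab.2 ∘ swapRev n) := fun _ => rfl
  have support_iff (a : Fin n × Fin n → ℕ) :
      (∀ p, p ∉ pairsLt n → a (swapRev n p) = 0) ↔ ∀ p, p ∉ pairsLt n → a p = 0 :=
    (swapRev n).forall_congr fun {p} => by rw [swapRev_mem_pairsLt]
  refine finsum_mem_eq_of_bijOn e (e.bijOn fun ab => ?_) fun ab _ => ?_
  · simp only [Set.mem_ofPred_eq, he, and_assoc, Sum.forall, Finset.inl_mem_disjSum,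
      Finset.inr_mem_disjSum, Sum.elim_inl, Sum.elim_inr, Function.comp_apply, support_iff,
      Finset.sum_disjSum, rootD, sum_comp_swapRev_smul_sub, sum_comp_swapRev_smul_add]
    refine and_congr_right fun _ => and_congr_right fun _ => ?_
    rw [funext_iff, funext_iff, ← Fin.revPerm.forall_congr_right]
    simp only [Pi.add_apply, Pi.sub_apply, Fin.revPerm_apply, Fin.rev_rev]
    exact forall_congr' fun i => by constructor <;> intro h <;> linarith
  · simp only [he, Finset.sum_disjSum, Sum.elim_inl, Sum.elim_inr, Function.comp_apply,
      sum_comp_swapRev]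

lemma rho_rev (i : Fin n) : rho n i.rev = n + 1 - rho n i := by
  simp only [rho, Fin.val_rev]
  omega

theorem uP_eq_KT_RD_rev (M : ℤ) (lam mu : Fin n → ℤ) :
    uP n lam mu = KT n (RD n) (fun i => M - lam i.rev) (fun i => M - mu i.rev) := by
  refine Fintype.sum_equiv (MulAut.conj Fin.revPerm).toEquiv _ _ fun σ => ?_
  simp only [MulEquiv.toEquiv_eq_coe, MulEquiv.coe_toEquiv, MulAut.conj_apply, map_mul, map_inv,
    mul_inv_cancel_comm, fq_eq_Pq_RD]
  congr 2
  funext i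
  simp only [Pi.add_apply, Equiv.Perm.mul_apply, Equiv.Perm.inv_def, Fin.revPerm_symm,
    Fin.revPerm_apply, Fin.rev_rev, rho_rev]
  ring

end

theorem u_eq_KtildeD_dual_general (n : ℕ) (hn : 0 < n) (lam mu : Fin n → ℤ) :
    uP n lam mu =
      KT n (RD n)
        (fun i => max (lam ⟨0, hn⟩) (mu ⟨0, hn⟩) - lam i.rev)
        (fun i => max (lam ⟨0, hn⟩) (mu ⟨0, hn⟩) - mu i.rev) :=
  uP_eq_KT_RD_rev _ lam mu

/-- for partitions `λ, μ` of length `n`, with `m = max(λ_1, μ_1)`,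
`λ̂ = (m-λ_n, ..., m-λ_1)` and `μ̂ = (m-μ_n, ..., m-μ_1)`, one has
`u_{λ,μ}(q) = K̃^{D_n}_{λ̂,μ̂}(q)`. -/
theorem u_eq_KtildeD_dual (n : ℕ) (hn : 0 < n) (lam mu : Fin n → ℤ)
    (hlam : Antitone lam) (hlam0 : ∀ i, 0 ≤ lam i)
    (hmu : Antitone mu) (hmu0 : ∀ i, 0 ≤ mu i) :
    uP n lam mu =
      KT n (RD n)
        (fun i => max (lam ⟨0, hn⟩) (mu ⟨0, hn⟩) - lam i.rev)
        (fun i => max (lam ⟨0, hn⟩) (mu ⟨0, hn⟩) - mu i.rev) :=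
  u_eq_KtildeD_dual_general n hn lam mu
end
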